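/- arXiv:1910.13133 — 12 statements merged into one kernel-verified Lean document; each statement's English description precedes it below -/
import Mathlib

section
/- Let M be a b×v (0,1)-matrix over a field F of characteristic p, and d ∈ F a nonzero element with a square root s (s² = d) and such that −d has a square root t (t² = −d) in F. Suppose every row of M has weight ≡ 0 mod p, and any two distinct rows of M have inner product ≡ d mod p (as elements of the prime field). Then the rows of the b×(b+v+1) matrix A = [s·I_b | M | t·𝟏], where 𝟏 is the all-one column, span a self-orthogonal code over F of dimension b. -/
open Matrix Finset

/-- If every row of a (0,1)-matrix M has weight ≡ 0 mod p and distinct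
rows have inner product ≡ d mod p (d ≠ 0), and s² = d, t² = -d in F (char p), then the
rows of A = [s·I_b | M | t·𝟏] span a self-orthogonal code of dimension b. -/
theorem stmt1 {F : Type*} [Field F] [DecidableEq F] (p b v : ℕ) (hp : p.Prime)
    [CharP F p] (M : Matrix (Fin b) (Fin v) F) (d s t : F)
    (hd0 : d ≠ 0) (hs : s ^ 2 = d) (ht : t ^ 2 = -d)
    (h01 : ∀ i j, M i j = 0 ∨ M i j = 1)
    (hw : ∀ i, (((Finset.univ.filter (fun j => M i j = 1)).card : ℕ) : F) = 0)
    (hdd : ∀ i i', i ≠ i' →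
      (((Finset.univ.filter (fun j => M i j = 1 ∧ M i' j = 1)).card : ℕ) : F) = d)
    (A : Fin b → (Fin b ⊕ Fin v ⊕ Fin 1) → F)
    (hA : A = fun i => Sum.elim (fun i' => if i = i' then s else 0)
      (Sum.elim (M i) (fun _ => t))) :
    (∀ u ∈ Submodule.span F (Set.range A),
      ∀ w ∈ Submodule.span F (Set.range A), u ⬝ᵥ w = 0) ∧
    Module.finrank F (Submodule.span F (Set.range A)) = b := by
  have hs0 : s ≠ 0 := by
    intro h; apply hd0; rw [← hs, h]; ring
  -- middle sum computation
  have hmid : ∀ i i', ∑ j, M i j * M i' j =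
      (((Finset.univ.filter (fun j => M i j = 1 ∧ M i' j = 1)).card : ℕ) : F) := by
    intro i i'
    rw [← Finset.sum_boole]
    apply Finset.sum_congr rfl
    intro j _
    rcases h01 i j with h1 | h1 <;> rcases h01 i' j with h2 | h2 <;>
      simp [h1, h2]
  have hkey : ∀ i i', A i ⬝ᵥ A i' = 0 := by
    intro i i'
    subst hA
    simp only [dotProduct, Fintype.sum_sum_type, Sum.elim_inl, Sum.elim_inr]
    have h3 : (∑ _x : Fin 1, t * t) = -d := by
      simpa [← sq] using ht
    have h1 : (∑ x : Fin b, (if i = x then s else 0) * (if i' = x then s else 0))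
        = if i = i' then d else 0 := by
      rw [Finset.sum_eq_single i]
      · by_cases h : i = i'
        · simp [h, ← hs, sq]
        · simp [h, Ne.symm h]
      · intro c _ hc; simp [Ne.symm hc]
      · simp
    rw [h1, h3, hmid]
    by_cases h : i = i'
    · subst h
      have : Finset.univ.filter (fun j => M i j = 1 ∧ M i j = 1)
          = Finset.univ.filter (fun j => M i j = 1) := by
        apply Finset.filter_congr; intro j _; simp
      rw [this, hw]
      simp
    · rw [hdd i i' h]
      simp [h]
  constructor
  · intro u hu w hw'
    induction hu using Submodule.span_induction with
    | mem x hx =>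
      induction hw' using Submodule.span_induction with
      | mem y hy =>
        obtain ⟨i, rfl⟩ := hx
        obtain ⟨i', rfl⟩ := hy
        exact hkey i i'
      | zero => simp
      | add y z _ _ hy hz => rw [dotProduct_add, hy, hz, add_zero]
      | smul c y _ hy => rw [dotProduct_smul, hy, smul_zero]
    | zero => simp
    | add y z _ _ hy hz => rw [add_dotProduct, hy, hz, add_zero]
    | smul c y _ hy => rw [smul_dotProduct, hy, smul_zero]
  · have hli : LinearIndependent F A := by
      rw [Fintype.linearIndependent_iff]
      intro g hg i
      have := congrFun hg (Sum.inl i)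
      simp only [hA, Finset.sum_apply, Pi.smul_apply, Sum.elim_inl, smul_eq_mul,
        Pi.zero_apply] at this
      rw [Finset.sum_eq_single i (by intro c _ hc; simp [hc]) (by simp)] at this
      simp only [if_pos rfl] at this
      exact (mul_eq_zero.mp this).resolve_right hs0
    rw [finrank_span_eq_card hli, Fintype.card_fin]
end

section
/- Let M be a b×v (0,1)-matrix over a field F of characteristic p, and a ∈ F a nonzero element such that −a has a square root t in F (t² = −a). Suppose every row of M has weight ≡ a mod p, and any two distinct rows have inner product ≡ 0 mod p. Then the rows of the b×(b+v) matrix A = [t·I_b | M] span a self-orthogonal code over F of dimension b. Moreover, if b = v, this code is self-dual. -/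
open Matrix Finset

/-!
Each row of `[t·I | M]` has dot square `t² + a = 0`, and distinct rows meet only in the
`M`-part, where the dot product counts common ones; so the rows span a self-orthogonal code.
The block `t·I` with `t ≠ 0` makes the rows independent. When `b = v` the dimension is half
the length; the dot product is nondegenerate, so the dual has the same dimension and the code
equals it.
-/

lemma dotProduct_eq_card_of_zero_or_one {R ι : Type*} [NonAssocSemiring R] [DecidableEq R]
    [Fintype ι] {x y : ι → R} (hx : ∀ j, x j = 0 ∨ x j = 1) (hy : ∀ j, y j = 0 ∨ y j = 1) :
    x ⬝ᵥ y = #{j | x j = 1 ∧ y j = 1} := by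
  rw [Finset.natCast_card_filter]
  refine Finset.sum_congr rfl fun j _ => ?_
  rcases hx j with h | h <;> rcases hy j with h' | h' <;> simp [h, h']

lemma dotProduct_eq_zero_of_mem_span {R ι κ : Type*} [CommSemiring R] [Fintype ι]
    {v : κ → ι → R} (hv : ∀ i j, v i ⬝ᵥ v j = 0) {u w : ι → R}
    (hu : u ∈ Submodule.span R (Set.range v)) (hw : w ∈ Submodule.span R (Set.range v)) :
    u ⬝ᵥ w = 0 := by
  induction hu using Submodule.span_induction with
  | mem x hx =>
    obtain ⟨i, rfl⟩ := hx
    induction hw using Submodule.span_induction with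
    | mem y hy => obtain ⟨j, rfl⟩ := hy; exact hv i j
    | zero => simp
    | add y z _ _ hy hz => simp [dotProduct_add, hy, hz]
    | smul c y _ hy => simp [hy]
  | zero => simp
  | add x y _ _ hx hy => simp [add_dotProduct, hx, hy]
  | smul c x _ hx => simp [hx]

lemma linearIndependent_sumElim_single {F ι κ : Type*} [Field F] [DecidableEq κ] {t : F}
    (ht : t ≠ 0) (y : κ → ι → F) :
    LinearIndependent F fun i => Sum.elim (Pi.single i t) (y i) :=
  LinearIndependent.of_comp (LinearMap.funLeft F F Sum.inl)
    (Pi.linearIndependent_single_of_ne_zero fun _ => ht)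

section Field

variable {F ι : Type*} [Field F] [Fintype ι] [DecidableEq ι]

lemma dotProductBilin_eq_toBilin'_one :
    (dotProductBilin F F : LinearMap.BilinForm F (ι → F)) = Matrix.toBilin' 1 := by
  ext u w
  simp [Matrix.toBilin'_apply', one_apply, Pi.single_apply, eq_comm]

lemma dotProductBilin_nondegenerate :
    (dotProductBilin F F : LinearMap.BilinForm F (ι → F)).Nondegenerate := by
  rw [dotProductBilin_eq_toBilin'_one]
  exact (nondegenerate_of_det_ne_zero (by simp)).toBilin'

lemma mem_iff_forall_dotProduct_eq_zero_of_two_mul_finrank_eq {W : Submodule F (ι → F)}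
    (hW : ∀ u ∈ W, ∀ w ∈ W, u ⬝ᵥ w = 0) (hdim : 2 * Module.finrank F W = Fintype.card ι)
    (u : ι → F) : u ∈ W ↔ ∀ x ∈ W, u ⬝ᵥ x = 0 := by
  set B : LinearMap.BilinForm F (ι → F) := dotProductBilin F F
  have hle : W ≤ B.orthogonal W := fun w hw =>
    LinearMap.BilinForm.mem_orthogonal_iff.mpr fun n hn => hW n hn w hw
  have heq : W = B.orthogonal W := by
    refine Submodule.eq_of_le_of_finrank_eq hle ?_
    rw [LinearMap.BilinForm.finrank_orthogonal dotProductBilin_nondegenerate, Module.finrank_pi]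
    omega
  refine ⟨fun hu x hx => hW u hu x hx, fun h => ?_⟩
  rw [heq, LinearMap.BilinForm.mem_orthogonal_iff]
  intro x hx
  simpa [B, dotProduct_comm] using h x hx

end Field

theorem stmt2_general {F : Type*} [Field F] [DecidableEq F] (b v : ℕ)
    (M : Matrix (Fin b) (Fin v) F) (a t : F)
    (ha0 : a ≠ 0) (ht : t ^ 2 = -a)
    (h01 : ∀ i j, M i j = 0 ∨ M i j = 1)
    (hw : ∀ i, (((Finset.univ.filter (fun j => M i j = 1)).card : ℕ) : F) = a)
    (hdd : ∀ i i', i ≠ i' →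
      (((Finset.univ.filter (fun j => M i j = 1 ∧ M i' j = 1)).card : ℕ) : F) = 0)
    (A : Fin b → (Fin b ⊕ Fin v) → F)
    (hA : A = fun i => Sum.elim (fun i' => if i = i' then t else 0) (M i)) :
    (∀ u ∈ Submodule.span F (Set.range A),
      ∀ w ∈ Submodule.span F (Set.range A), u ⬝ᵥ w = 0) ∧
    Module.finrank F (Submodule.span F (Set.range A)) = b ∧
    (b = v → ∀ u : (Fin b ⊕ Fin v) → F,
      u ∈ Submodule.span F (Set.range A) ↔
        ∀ x ∈ Submodule.span F (Set.range A), u ⬝ᵥ x = 0) := by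
  have hA' : A = fun i => Sum.elim (Pi.single i t) (M i) := by
    rw [hA]
    ext i (j | j) <;> simp [Pi.single_apply, eq_comm]
  have ht0 : t ≠ 0 := by
    rintro rfl
    exact ha0 (by simpa using ht.symm)
  have hrows : ∀ i j, A i ⬝ᵥ A j = 0 := by
    intro i j
    rw [hA', sumElim_dotProduct_sumElim, single_dotProduct, Pi.single_apply,
      dotProduct_eq_card_of_zero_or_one (h01 i) (h01 j)]
    by_cases hij : i = j
    · subst hij
      simp only [and_self, hw, if_true, ← sq, ht, neg_add_cancel]
    · simp [hij, hdd i j hij]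
  have hrank : Module.finrank F (Submodule.span F (Set.range A)) = b := by
    rw [finrank_span_eq_card (hA' ▸ linearIndependent_sumElim_single ht0 M), Fintype.card_fin]
  have horth : ∀ u ∈ Submodule.span F (Set.range A),
      ∀ w ∈ Submodule.span F (Set.range A), u ⬝ᵥ w = 0 :=
    fun u hu w hw => dotProduct_eq_zero_of_mem_span hrows hu hw
  refine ⟨horth, hrank, ?_⟩
  rintro rfl
  exact mem_iff_forall_dotProduct_eq_zero_of_two_mul_finrank_eq horth (by simp [hrank, two_mul])

/-- If every row of a (0,1)-matrix M has weight ≡ a mod p (a ≠ 0) and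
distinct rows have inner product ≡ 0 mod p, and t² = -a in F (char p), then the rows
of A = [t·I_b | M] span a self-orthogonal code of dimension b; if b = v it is
self-dual. -/
theorem stmt2 {F : Type*} [Field F] [DecidableEq F] (p b v : ℕ) (hp : p.Prime)
    [CharP F p] (M : Matrix (Fin b) (Fin v) F) (a t : F)
    (ha0 : a ≠ 0) (ht : t ^ 2 = -a)
    (h01 : ∀ i j, M i j = 0 ∨ M i j = 1)
    (hw : ∀ i, (((Finset.univ.filter (fun j => M i j = 1)).card : ℕ) : F) = a)
    (hdd : ∀ i i', i ≠ i' →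
      (((Finset.univ.filter (fun j => M i j = 1 ∧ M i' j = 1)).card : ℕ) : F) = 0)
    (A : Fin b → (Fin b ⊕ Fin v) → F)
    (hA : A = fun i => Sum.elim (fun i' => if i = i' then t else 0) (M i)) :
    (∀ u ∈ Submodule.span F (Set.range A),
      ∀ w ∈ Submodule.span F (Set.range A), u ⬝ᵥ w = 0) ∧
    Module.finrank F (Submodule.span F (Set.range A)) = b ∧
    (b = v → ∀ u : (Fin b ⊕ Fin v) → F,
      u ∈ Submodule.span F (Set.range A) ↔
        ∀ x ∈ Submodule.span F (Set.range A), u ⬝ᵥ x = 0) :=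
  stmt2_general b v M a t ha0 ht h01 hw hdd A hA
end

section
/- Let M be a b×v (0,1)-matrix over a field F of characteristic p. Let a, d ∈ F with a ≠ d, and suppose d−a has square root s and −d has square root t in F. Suppose every row of M has weight ≡ a mod p and any two distinct rows have inner product ≡ d mod p. Then the rows of A = [s·I_b | M | t·𝟏] span a self-orthogonal code over F of dimension b. -/
open Matrix Finset

/-- If every row of a (0,1)-matrix M has weight ≡ a mod p, distinct rows
have inner product ≡ d mod p with a ≠ d, and s² = d - a, t² = -d in F (char p), then
the rows of A = [s·I_b | M | t·𝟏] span a self-orthogonal code of dimension b. -/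
theorem stmt4 {F : Type*} [Field F] [DecidableEq F] (p b v : ℕ) (hp : p.Prime)
    [CharP F p] (M : Matrix (Fin b) (Fin v) F) (a d s t : F)
    (had : a ≠ d) (hs : s ^ 2 = d - a) (ht : t ^ 2 = -d)
    (h01 : ∀ i j, M i j = 0 ∨ M i j = 1)
    (hw : ∀ i, (((Finset.univ.filter (fun j => M i j = 1)).card : ℕ) : F) = a)
    (hdd : ∀ i i', i ≠ i' →
      (((Finset.univ.filter (fun j => M i j = 1 ∧ M i' j = 1)).card : ℕ) : F) = d)
    (A : Fin b → (Fin b ⊕ Fin v ⊕ Fin 1) → F)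
    (hA : A = fun i => Sum.elim (fun i' => if i = i' then s else 0)
      (Sum.elim (M i) (fun _ => t))) :
    (∀ u ∈ Submodule.span F (Set.range A),
      ∀ w ∈ Submodule.span F (Set.range A), u ⬝ᵥ w = 0) ∧
    Module.finrank F (Submodule.span F (Set.range A)) = b := by
  have hs0 : s ≠ 0 := by
    intro h
    have h2 : d - a = 0 := by rw [← hs, h]; ring
    exact had (sub_eq_zero.mp h2).symm
  -- rows are pairwise orthogonal
  have key : ∀ i i', A i ⬝ᵥ A i' = 0 := by
    intro i i'
    subst hA
    simp only [dotProduct, Fintype.sum_sum_type, Sum.elim_inl, Sum.elim_inr]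
    have h1 : ∑ x : Fin b, (if i = x then s else 0) * (if i' = x then s else 0) =
        if i = i' then s ^ 2 else 0 := by
      rw [Finset.sum_eq_single i]
      · by_cases h : i = i'
        · simp [h, sq]
        · rw [if_neg h, if_neg fun h' : i' = i => h h'.symm, mul_zero]
      · intro x _ hx
        simp [Ne.symm hx]
      · simp
    have h2 : ∑ x : Fin v, M i x * M i' x =
        (((Finset.univ.filter (fun j => M i j = 1 ∧ M i' j = 1)).card : ℕ) : F) := by
      rw [← Finset.sum_boole]
      refine Finset.sum_congr rfl fun x _ => ?_
      rcases h01 i x with h | h <;> rcases h01 i' x with h' | h' <;> simp [h, h']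
    have h3 : ∑ x : Fin 1, t * t = t ^ 2 := by simp [sq]
    rw [h1, h2, h3]
    by_cases h : i = i'
    · subst h
      have : (Finset.univ.filter (fun j => M i j = 1 ∧ M i j = 1)) =
          (Finset.univ.filter (fun j => M i j = 1)) := by
        simp
      rw [this, hw, if_pos rfl, hs, ht]
      ring
    · rw [hdd i i' h, ht, if_neg h]
      ring
  constructor
  · intro u hu w hw'
    induction hu using Submodule.span_induction with
    | mem x hx =>
      obtain ⟨i, rfl⟩ := hx
      induction hw' using Submodule.span_induction with
      | mem y hy => obtain ⟨i', rfl⟩ := hy; exact key i i'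
      | zero => simp
      | add y z _ _ hy hz => rw [dotProduct_add, hy, hz, add_zero]
      | smul c y _ hy => rw [dotProduct_smul, hy, smul_zero]
    | zero => simp
    | add y z _ _ hy hz => rw [add_dotProduct, hy, hz, add_zero]
    | smul c y _ hy => rw [smul_dotProduct, hy, smul_zero]
  · have li : LinearIndependent F A := by
      rw [Fintype.linearIndependent_iff]
      intro g hg i
      have := congrFun hg (Sum.inl i)
      rw [Finset.sum_apply] at this
      subst hA
      simp only [Pi.smul_apply, Sum.elim_inl, smul_eq_mul] at this
      rw [Finset.sum_eq_single i] at this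
      · simp only [if_pos rfl] at this
        rcases mul_eq_zero.mp this with h | h
        · exact h
        · exact absurd h hs0
      · intro x _ hx
        simp [hx]
      · simp
    rw [finrank_span_eq_card li]
    simp
end

section
/- Let D be a 1-design with incidence matrix M (rows = blocks, columns = points), and let G be an automorphism group of D acting on points with orbits V_1,…,V_n and on blocks with orbits B_1,…,B_m. Define the orbit matrix O by O_{i,j} = the number of points of V_j incident with a (any) block of B_i. Then for each block x in orbit B_s and each t, the sum over blocks x' in B_t of |x ∩ x'| equals Σ_{j=1}^n (|B_t|/|V_j|) · O_{s,j} · O_{t,j}. -/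
/-!
Fix a block orbit `B_t` and let `c p` be the number of blocks of `B_t` through the point `p`.
Since `B_t` is `G`-stable, `c` is `G`-invariant, hence constant on each point orbit `V_j`; double
counting the flags between `V_j` and `B_t` gives `|V_j| · c = |B_t| · O_{t,j}` there. The left-hand
side counts the flags `(p, x')` with `p ∈ x` and `x' ∈ B_t`, i.e. it is `∑_{p ∈ x} c p`, and
splitting the points of `x` along the orbits `V_j` (`O_{s,j}` of them in `V_j`) gives the right-hand side.
-/

open Matrix Finset

namespace Finset

theorem sum_eq_sum_sum_of_existsUnique_mem {ι α M : Type*} [Fintype ι] [Fintype α]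
    [AddCommMonoid M] (V : ι → Finset α) (hV : ∀ a, ∃! i, a ∈ V i) (f : α → M) :
    ∑ a, f a = ∑ i, ∑ a ∈ V i, f a := by
  classical
  have hdisj : ((univ : Finset ι) : Set ι).PairwiseDisjoint V := fun i _ j _ hij =>
    disjoint_left.mpr fun a hai haj => hij ((hV a).unique hai haj)
  have hcover : univ.biUnion V = univ :=
    eq_univ_of_forall fun a => mem_biUnion.mpr ⟨(hV a).exists.choose, mem_univ _,
      (hV a).exists.choose_spec⟩
  rw [← sum_biUnion hdisj, hcover]

end Finset

namespace MulAction

variable {G α : Type*} [Group G] [MulAction G α]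

theorem smul_mem_of_coe_eq_orbit {s : Finset α} {a : α} (hs : (s : Set α) = orbit G a)
    (g : G) {b : α} (hb : b ∈ s) : g • b ∈ s := by
  rw [← Finset.mem_coe, hs] at hb ⊢
  exact mem_orbit_of_mem_orbit g hb

theorem sum_eq_card_smul_of_coe_eq_orbit {M : Type*} [AddCommMonoid M] {s : Finset α} {a : α}
    (hs : (s : Set α) = orbit G a) {f : α → M} (hf : ∀ (g : G) b, f (g • b) = f b)
    {b : α} (hb : b ∈ s) : ∑ c ∈ s, f c = #s • f b := by
  have hfb : ∀ c ∈ s, f c = f b := fun c hc => by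
    rw [← Finset.mem_coe, hs] at hb hc
    have hbc : b ∈ orbit G c := (orbit_eq_iff.mpr hc).symm ▸ hb
    obtain ⟨g, rfl⟩ := hbc
    exact (hf g c).symm
  rw [Finset.sum_congr rfl hfb, Finset.sum_const]

end MulAction

section IncidenceStructure

open MulAction

variable {G P B : Type*} [Group G] [MulAction G P] [MulAction G B]
  (Inc : B → P → Prop) [∀ x, DecidablePred (Inc x)]

theorem card_filter_inc_smul {S : Finset B} (hS : ∀ (g : G) x, x ∈ S → g • x ∈ S)
    (hInc : ∀ (g : G) x p, Inc x p ↔ Inc (g • x) (g • p)) (g : G) (p : P) :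
    #(S.filter (Inc · (g • p))) = #(S.filter (Inc · p)) := by
  refine card_nbij' (g⁻¹ • ·) (g • ·) ?_ ?_ (fun x _ => smul_inv_smul g x)
    (fun x _ => inv_smul_smul g x)
  · intro x hx
    rw [mem_coe, mem_filter] at hx ⊢
    exact ⟨hS _ _ hx.1, by simpa using (hInc g⁻¹ x (g • p)).mp hx.2⟩
  · intro x hx
    rw [mem_coe, mem_filter] at hx ⊢
    exact ⟨hS _ _ hx.1, (hInc g x p).mp hx.2⟩

theorem card_mul_card_filter_inc_eq {S : Finset B} (hS : ∀ (g : G) x, x ∈ S → g • x ∈ S)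
    (hInc : ∀ (g : G) x p, Inc x p ↔ Inc (g • x) (g • p)) {V : Finset P} {p₀ : P}
    (hV : (V : Set P) = orbit G p₀) {o : ℕ} (ho : ∀ x ∈ S, #(V.filter (Inc x)) = o)
    {p : P} (hp : p ∈ V) :
    #V * #(S.filter (Inc · p)) = #S * o := by
  calc #V * #(S.filter (Inc · p))
      = ∑ q ∈ V, #(S.filter (Inc · q)) := by
        rw [sum_eq_card_smul_of_coe_eq_orbit hV (card_filter_inc_smul Inc hS hInc) hp, smul_eq_mul]
    _ = ∑ x ∈ S, #(V.filter (Inc x)) :=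
        sum_card_bipartiteAbove_eq_sum_card_bipartiteBelow (fun q x => Inc x q)
    _ = #S * o := by rw [sum_congr rfl ho, sum_const, smul_eq_mul]

theorem sum_card_filter_inc_inc_eq [Fintype P] (x : B) (S : Finset B) :
    ∑ x' ∈ S, #(univ.filter (fun p => Inc x p ∧ Inc x' p))
      = ∑ p ∈ univ.filter (Inc x), #(S.filter (Inc · p)) := by
  simp_rw [← filter_filter]
  exact (sum_card_bipartiteAbove_eq_sum_card_bipartiteBelow (fun p x' => Inc x' p)).symm

end IncidenceStructure

theorem stmt5_general {P B G : Type*} [Fintype P] [Group G]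
    [MulAction G P] [MulAction G B]
    (Inc : B → P → Prop) [∀ x, DecidablePred (Inc x)]
    (hGInc : ∀ (g : G) (x : B) (pt : P), Inc x pt ↔ Inc (g • x) (g • pt))
    (n m : ℕ) (Vo : Fin n → Finset P) (Bo : Fin m → Finset B)
    (hVo : ∀ j, ∃ pt, (Vo j : Set P) = MulAction.orbit G pt)
    (hVpart : ∀ pt : P, ∃! j, pt ∈ Vo j)
    (hBo : ∀ i, ∃ x, (Bo i : Set B) = MulAction.orbit G x)
    (O : Matrix (Fin m) (Fin n) ℕ)
    (hO : ∀ i j, ∀ x ∈ Bo i, O i j = ((Vo j).filter (fun pt => Inc x pt)).card) :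
    ∀ (s t : Fin m), ∀ x ∈ Bo s,
      (∑ x' ∈ Bo t,
          (((Finset.univ.filter (fun pt => Inc x pt ∧ Inc x' pt)).card : ℚ)))
        = ∑ j, (((Bo t).card : ℚ) / ((Vo j).card : ℚ)) * (O s j : ℚ) * (O t j : ℚ) := by
  intro s t x hx
  obtain ⟨x₀, hx₀⟩ := hBo t
  have hstable : ∀ (g : G) x', x' ∈ Bo t → g • x' ∈ Bo t :=
    fun g _ => MulAction.smul_mem_of_coe_eq_orbit hx₀ g
  have hcount : ∀ j, ∀ p ∈ Vo j,
      (#((Bo t).filter (Inc · p)) : ℚ) = #(Bo t) * O t j / #(Vo j) := fun j p hp => by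
    obtain ⟨p₀, hp₀⟩ := hVo j
    have hVpos : (0 : ℚ) < #(Vo j) := by exact_mod_cast card_pos.mpr ⟨p, hp⟩
    rw [eq_div_iff hVpos.ne', mul_comm]
    exact_mod_cast card_mul_card_filter_inc_eq Inc hstable hGInc hp₀
      (fun x' hx' => (hO t j x' hx').symm) hp
  rw [← Nat.cast_sum, sum_card_filter_inc_inc_eq, Nat.cast_sum, sum_filter,
    sum_eq_sum_sum_of_existsUnique_mem Vo hVpart]
  refine sum_congr rfl fun j _ => ?_
  rw [← sum_filter, sum_congr rfl fun p hp => hcount j p (mem_filter.mp hp).1, sum_const,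
    ← hO s j x hx, nsmul_eq_mul]
  ring

/-- For a 1-design with automorphism group G, point orbits V_1,…,V_n,
block orbits B_1,…,B_m and orbit matrix O, for every block x in orbit B_s:
∑_{x' ∈ B_t} |x ∩ x'| = ∑_j (|B_t|/|V_j|) · O_{s,j} · O_{t,j}. -/
theorem stmt5 {P B G : Type*} [Fintype P] [Fintype B] [Group G]
    [MulAction G P] [MulAction G B]
    (Inc : B → P → Prop) [∀ x, DecidablePred (Inc x)]
    (hGInc : ∀ (g : G) (x : B) (pt : P), Inc x pt ↔ Inc (g • x) (g • pt))
    (k r : ℕ)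
    (hk : ∀ x : B, (Finset.univ.filter (fun pt => Inc x pt)).card = k)
    (hr : ∀ pt : P, (Finset.univ.filter (fun x => Inc x pt)).card = r)
    (n m : ℕ) (Vo : Fin n → Finset P) (Bo : Fin m → Finset B)
    (hVo : ∀ j, ∃ pt, (Vo j : Set P) = MulAction.orbit G pt)
    (hVpart : ∀ pt : P, ∃! j, pt ∈ Vo j)
    (hBo : ∀ i, ∃ x, (Bo i : Set B) = MulAction.orbit G x)
    (hBpart : ∀ x : B, ∃! i, x ∈ Bo i)
    (O : Matrix (Fin m) (Fin n) ℕ)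
    (hO : ∀ i j, ∀ x ∈ Bo i, O i j = ((Vo j).filter (fun pt => Inc x pt)).card) :
    ∀ (s t : Fin m), ∀ x ∈ Bo s,
      (∑ x' ∈ Bo t,
          (((Finset.univ.filter (fun pt => Inc x pt ∧ Inc x' pt)).card : ℚ)))
        = ∑ j, (((Bo t).card : ℚ) / ((Vo j).card : ℚ)) * (O s j : ℚ) * (O t j : ℚ) :=
  stmt5_general Inc hGInc n m Vo Bo hVo hVpart hBo O hO
end

section
/- Let D be a 1-(v,k,r) design with block intersection numbers all ≡ d mod p and block size k ≡ a mod p. Let G be an automorphism group acting with all point orbits of length w and block orbits B_1,…,B_m of lengths b_1,…,b_m, and let O be the orbit matrix. Then for s ≠ t, (b_t/w)·(O[s]·O[t]) ≡ b_t·d mod p, and (b_s/w)·(O[s]·O[s]) ≡ a + (b_s−1)·d mod p, where O[s] denotes the s-th row of O and · is the standard inner product of integer vectors. -/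
open Matrix Finset

/-- For a 1-(v,k,r) design with k ≡ a mod p and all block intersection
numbers ≡ d mod p, and an automorphism group with all point orbits of length w and
block orbits of lengths b_1,…,b_m with orbit matrix O: for s ≠ t the integer
(b_t/w)·(O[s]·O[t]) is ≡ b_t·d mod p, and (b_s/w)·(O[s]·O[s]) ≡ a + (b_s−1)·d mod p. -/
theorem stmt6 {P B G : Type*} [Fintype P] [Fintype B] [Group G]
    [MulAction G P] [MulAction G B]
    (Inc : B → P → Prop) [∀ x, DecidablePred (Inc x)]
    (hGInc : ∀ (g : G) (x : B) (pt : P), Inc x pt ↔ Inc (g • x) (g • pt))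
    (p : ℕ) (hp : p.Prime) (a d : ℤ) (k r : ℕ)
    (hk : ∀ x : B, (Finset.univ.filter (fun pt => Inc x pt)).card = k)
    (hr : ∀ pt : P, (Finset.univ.filter (fun x => Inc x pt)).card = r)
    (hka : (k : ℤ) ≡ a [ZMOD p])
    (hint : ∀ x x' : B, x ≠ x' →
      (((Finset.univ.filter (fun pt => Inc x pt ∧ Inc x' pt)).card : ℤ)) ≡ d [ZMOD p])
    (n m w : ℕ) (Vo : Fin n → Finset P) (Bo : Fin m → Finset B) (bL : Fin m → ℕ)
    (hVo : ∀ j, ∃ pt, (Vo j : Set P) = MulAction.orbit G pt)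
    (hVpart : ∀ pt : P, ∃! j, pt ∈ Vo j)
    (hVw : ∀ j, (Vo j).card = w)
    (hBo : ∀ i, ∃ x, (Bo i : Set B) = MulAction.orbit G x)
    (hBpart : ∀ x : B, ∃! i, x ∈ Bo i)
    (hBL : ∀ i, (Bo i).card = bL i)
    (O : Matrix (Fin m) (Fin n) ℤ)
    (hO : ∀ i j, ∀ x ∈ Bo i,
      O i j = (((Vo j).filter (fun pt => Inc x pt)).card : ℤ)) :
    (∀ s t : Fin m, s ≠ t → ∃ c : ℤ, (w : ℤ) * c = (bL t : ℤ) * (O s ⬝ᵥ O t) ∧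
      c ≡ (bL t : ℤ) * d [ZMOD p]) ∧
    (∀ s : Fin m, ∃ c : ℤ, (w : ℤ) * c = (bL s : ℤ) * (O s ⬝ᵥ O s) ∧
      c ≡ a + ((bL s : ℤ) - 1) * d [ZMOD p]) := by
  classical
  -- orbits are nonempty
  have hVne : ∀ j, (Vo j).Nonempty := by
    intro j
    obtain ⟨pt, hpt⟩ := hVo j
    refine ⟨pt, ?_⟩
    have : pt ∈ (Vo j : Set P) := by rw [hpt]; exact MulAction.mem_orbit_self pt
    exact_mod_cast this
  have hBne : ∀ i, (Bo i).Nonempty := by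
    intro i
    obtain ⟨x, hx⟩ := hBo i
    refine ⟨x, ?_⟩
    have : x ∈ (Bo i : Set B) := by rw [hx]; exact MulAction.mem_orbit_self x
    exact_mod_cast this
  -- block orbits are invariant under G
  have hBinv : ∀ i (g : G) (x : B), x ∈ Bo i → g • x ∈ Bo i := by
    intro i g x hx
    obtain ⟨x0, hx0⟩ := hBo i
    have h1 : x ∈ (Bo i : Set B) := by exact_mod_cast hx
    rw [hx0] at h1
    obtain ⟨h, rfl⟩ := h1
    have : g • h • x0 ∈ (Bo i : Set B) := by
      rw [hx0]; exact ⟨g * h, mul_smul g h x0⟩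
    exact_mod_cast this
  -- the counting function: number of blocks of Bo t through a point
  set f : Fin m → P → ℕ := fun t pt => ((Bo t).filter (fun x' => Inc x' pt)).card with hf
  -- f is invariant under G
  have hfinv : ∀ t (g : G) (q : P), f t (g • q) = f t q := by
    intro t g q
    refine Finset.card_bij' (fun x' _ => g⁻¹ • x') (fun x' _ => g • x') ?_ ?_ ?_ ?_
    · intro x' hx'
      simp only [Finset.mem_filter] at hx' ⊢
      refine ⟨hBinv t g⁻¹ x' hx'.1, ?_⟩
      have h := (hGInc g⁻¹ x' (g • q)).mp hx'.2
      rwa [inv_smul_smul] at h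
    · intro x' hx'
      simp only [Finset.mem_filter] at hx' ⊢
      exact ⟨hBinv t g x' hx'.1, (hGInc g x' q).mp hx'.2⟩
    · intro x' _; simp
    · intro x' _; simp
  -- f is constant on point orbits
  have hfconst : ∀ t j, ∀ pt ∈ Vo j, ∀ pt' ∈ Vo j, f t pt = f t pt' := by
    intro t j pt hpt pt' hpt'
    obtain ⟨q, hq⟩ := hVo j
    have h1 : pt ∈ (Vo j : Set P) := by exact_mod_cast hpt
    have h2 : pt' ∈ (Vo j : Set P) := by exact_mod_cast hpt'
    rw [hq] at h1 h2
    obtain ⟨g1, rfl⟩ := h1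
    obtain ⟨g2, rfl⟩ := h2
    rw [hfinv, hfinv]
  -- step 3: for any point pt in Vo j, (w : ℤ) * f t pt = bL t * O t j
  have hstep3 : ∀ t j, ∀ pt ∈ Vo j, (w : ℤ) * (f t pt : ℤ) = (bL t : ℤ) * O t j := by
    intro t j pt hpt
    have hsum : ∑ q ∈ Vo j, (f t q : ℤ) = ∑ x' ∈ Bo t, (((Vo j).filter (fun q => Inc x' q)).card : ℤ) := by
      simp only [hf, Finset.card_filter]
      push_cast
      rw [Finset.sum_comm]
    have hL : ∑ q ∈ Vo j, (f t q : ℤ) = (w : ℤ) * (f t pt : ℤ) := by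
      rw [Finset.sum_congr rfl (fun q hq => by rw [hfconst t j q hq pt hpt])]
      rw [Finset.sum_const, hVw j]; push_cast; ring
    have hR : ∑ x' ∈ Bo t, (((Vo j).filter (fun q => Inc x' q)).card : ℤ) = (bL t : ℤ) * O t j := by
      rw [Finset.sum_congr rfl (fun x' hx' => (hO t j x' hx').symm)]
      rw [Finset.sum_const, hBL t]; push_cast; ring
    rw [← hL, hsum, hR]
  -- classifying map for point orbits
  set φ : P → Fin n := fun pt => (hVpart pt).choose with hφdef
  have hφ : ∀ pt j, φ pt = j ↔ pt ∈ Vo j := by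
    intro pt j
    constructor
    · rintro rfl; exact (hVpart pt).choose_spec.1
    · intro h; exact ((hVpart pt).choose_spec.2 j h).symm
  -- key identity
  have key : ∀ s t : Fin m, ∀ x ∈ Bo s,
      (w : ℤ) * (∑ x' ∈ Bo t, ((Finset.univ.filter (fun pt => Inc x pt ∧ Inc x' pt)).card : ℤ))
        = (bL t : ℤ) * (O s ⬝ᵥ O t) := by
    intro s t x hx
    set X : Finset P := Finset.univ.filter (fun pt => Inc x pt) with hX
    have hswap : ∑ x' ∈ Bo t, ((Finset.univ.filter (fun pt => Inc x pt ∧ Inc x' pt)).card : ℤ)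
        = ∑ pt ∈ X, (f t pt : ℤ) := by
      simp only [hf, Finset.card_filter]
      push_cast
      rw [Finset.sum_comm]
      rw [Finset.sum_filter]
      apply Finset.sum_congr rfl
      intro pt _
      by_cases h : Inc x pt
      · simp [h]
      · simp [h]
    have hfib : ∑ pt ∈ X, (f t pt : ℤ)
        = ∑ j, ∑ pt ∈ X.filter (fun pt => φ pt = j), (f t pt : ℤ) :=
      (Finset.sum_fiberwise X φ _).symm
    have hfilter : ∀ j, X.filter (fun pt => φ pt = j) = (Vo j).filter (fun pt => Inc x pt) := by
      intro j
      ext pt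
      simp only [Finset.mem_filter, hX, Finset.mem_filter, Finset.mem_univ, true_and, hφ]
      tauto
    have hmul : ∀ j, (w : ℤ) * ∑ pt ∈ X.filter (fun pt => φ pt = j), (f t pt : ℤ)
        = (bL t : ℤ) * (O t j * O s j) := by
      intro j
      obtain ⟨pt0, hpt0⟩ := hVne j
      rw [hfilter j]
      have hconst : ∀ pt ∈ (Vo j).filter (fun pt => Inc x pt), (f t pt : ℤ) = (f t pt0 : ℤ) := by
        intro pt hpt
        have := hfconst t j pt (Finset.mem_filter.mp hpt).1 pt0 hpt0
        exact_mod_cast this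
      rw [Finset.sum_congr rfl hconst, Finset.sum_const]
      have hcard : (((Vo j).filter (fun pt => Inc x pt)).card : ℤ) = O s j := (hO s j x hx).symm
      rw [nsmul_eq_mul]
      have := hstep3 t j pt0 hpt0
      calc (w : ℤ) * ((((Vo j).filter (fun pt => Inc x pt)).card : ℤ) * (f t pt0 : ℤ))
          = (((Vo j).filter (fun pt => Inc x pt)).card : ℤ) * ((w : ℤ) * (f t pt0 : ℤ)) := by ring
        _ = O s j * ((bL t : ℤ) * O t j) := by rw [hcard, this]
        _ = (bL t : ℤ) * (O t j * O s j) := by ring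
    rw [hswap, hfib, Finset.mul_sum]
    rw [Finset.sum_congr rfl (fun j _ => hmul j)]
    rw [dotProduct, Finset.mul_sum]
    apply Finset.sum_congr rfl
    intro j _
    ring
  -- disjointness of block orbits
  have hdisj : ∀ s t : Fin m, s ≠ t → ∀ x ∈ Bo s, ∀ x' ∈ Bo t, x ≠ x' := by
    intro s t hst x hx x' hx' h
    subst h
    exact hst (((hBpart x).unique hx hx'))
  constructor
  · intro s t hst
    obtain ⟨x, hx⟩ := hBne s
    refine ⟨∑ x' ∈ Bo t, ((Finset.univ.filter (fun pt => Inc x pt ∧ Inc x' pt)).card : ℤ),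
      key s t x hx, ?_⟩
    rw [← ZMod.intCast_eq_intCast_iff]
    push_cast
    have hsum : ∀ x' ∈ Bo t,
        (((Finset.univ.filter (fun pt => Inc x pt ∧ Inc x' pt)).card : ℕ) : ZMod p)
          = (d : ℤ) := by
      intro x' hx'
      have h := hint x x' (hdisj s t hst x hx x' hx')
      rw [← ZMod.intCast_eq_intCast_iff] at h
      push_cast at h
      exact h
    rw [Finset.sum_congr rfl hsum, Finset.sum_const, hBL t, nsmul_eq_mul]
  · intro s
    obtain ⟨x, hx⟩ := hBne s
    refine ⟨∑ x' ∈ Bo s, ((Finset.univ.filter (fun pt => Inc x pt ∧ Inc x' pt)).card : ℤ),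
      key s s x hx, ?_⟩
    rw [← ZMod.intCast_eq_intCast_iff]
    push_cast
    rw [← Finset.add_sum_erase (Bo s) _ hx]
    have hxx : (Finset.univ.filter (fun pt => Inc x pt ∧ Inc x pt)).card = k := by
      rw [← hk x]; congr 1; ext pt; simp
    have h1 : ((Finset.univ.filter (fun pt => Inc x pt ∧ Inc x pt)).card : ZMod p) = (a : ZMod p) := by
      rw [hxx]
      have := hka
      rw [← ZMod.intCast_eq_intCast_iff] at this
      push_cast at this
      exact this
    have hsum : ∀ x' ∈ (Bo s).erase x,
        (((Finset.univ.filter (fun pt => Inc x pt ∧ Inc x' pt)).card : ℕ) : ZMod p)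
          = (d : ℤ) := by
      intro x' hx'
      have hne : x ≠ x' := fun h => (Finset.mem_erase.mp hx').1 h.symm
      have h := hint x x' hne
      rw [← ZMod.intCast_eq_intCast_iff] at h
      push_cast at h
      exact h
    rw [h1, Finset.sum_congr rfl hsum, Finset.sum_const, Finset.card_erase_of_mem hx,
      hBL s, nsmul_eq_mul]
    have hb1 : 1 ≤ bL s := by
      rw [← hBL s]; exact Finset.card_pos.mpr ⟨x, hx⟩
    push_cast [Nat.cast_sub hb1]
    ring
end

section
/- Let D be a weakly self-orthogonal 1-design in which the block size k is even and all block intersection numbers are odd. Let G be an automorphism group acting with n point orbits all of length w and m block orbits of lengths b_1,…,b_m, where w = 2^u·w', b_i = 2^o·b_i' with w', b_i' odd and o ≤ u for all i, and suppose o = u = 0 (all orbit lengths odd). Let O be the m×n orbit matrix. Then the rows of the binary matrix [I_m | O | 𝟏] (O reduced mod 2, augmented by the identity and the all-one column) span a binary self-orthogonal code of length m + n + 1 and dimension m. -/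
open Matrix Finset

/-- For a weakly self-orthogonal 1-design with k even and all block
intersection numbers odd, and a group acting with n point orbits of length w and m
block orbits of lengths b_i, where w = 2^u·w', b_i = 2^o·b_i' with w', b_i' odd,
o ≤ u, and o = u = 0, the rows of [I_m | O | 𝟏] over F_2 span a binary
self-orthogonal code of length m + n + 1 and dimension m. -/
theorem stmt8 {P B G : Type*} [Fintype P] [Fintype B] [Group G]
    [MulAction G P] [MulAction G B]
    (Inc : B → P → Prop) [∀ x, DecidablePred (Inc x)]
    (hGInc : ∀ (g : G) (x : B) (pt : P), Inc x pt ↔ Inc (g • x) (g • pt))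
    (k r : ℕ)
    (hk : ∀ x : B, (Finset.univ.filter (fun pt => Inc x pt)).card = k)
    (hr : ∀ pt : P, (Finset.univ.filter (fun x => Inc x pt)).card = r)
    (hkeven : Even k)
    (hint : ∀ x x' : B, x ≠ x' →
      Odd (Finset.univ.filter (fun pt => Inc x pt ∧ Inc x' pt)).card)
    (n m w : ℕ) (Vo : Fin n → Finset P) (Bo : Fin m → Finset B) (bL : Fin m → ℕ)
    (hVo : ∀ j, ∃ pt, (Vo j : Set P) = MulAction.orbit G pt)
    (hVpart : ∀ pt : P, ∃! j, pt ∈ Vo j)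
    (hVw : ∀ j, (Vo j).card = w)
    (hBo : ∀ i, ∃ x, (Bo i : Set B) = MulAction.orbit G x)
    (hBpart : ∀ x : B, ∃! i, x ∈ Bo i)
    (hBL : ∀ i, (Bo i).card = bL i)
    (u o w' : ℕ) (b' : Fin m → ℕ)
    (hw : w = 2 ^ u * w') (hw' : Odd w')
    (hb : ∀ i, bL i = 2 ^ o * b' i) (hb' : ∀ i, Odd (b' i))
    (hou : o ≤ u) (ho : o = 0) (hu : u = 0)
    (O : Matrix (Fin m) (Fin n) ℕ)
    (hO : ∀ i j, ∀ x ∈ Bo i, O i j = ((Vo j).filter (fun pt => Inc x pt)).card)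
    (A : Fin m → (Fin m ⊕ Fin n ⊕ Fin 1) → ZMod 2)
    (hA : A = fun i => Sum.elim (fun i' => if i = i' then 1 else 0)
      (Sum.elim (fun j => ((O i j : ℕ) : ZMod 2)) (fun _ => 1))) :
    (∀ x ∈ Submodule.span (ZMod 2) (Set.range A),
      ∀ y ∈ Submodule.span (ZMod 2) (Set.range A), x ⬝ᵥ y = 0) ∧
    Module.finrank (ZMod 2) (Submodule.span (ZMod 2) (Set.range A)) = m := by
  classical
  subst hA ho hu
  simp only [pow_zero, one_mul] at hw hb
  have hwodd : Odd w := hw ▸ hw'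
  have hbodd : ∀ i, Odd (bL i) := fun i => (hb i) ▸ hb' i
  have hcast1 : ∀ nn : ℕ, Odd nn → (nn : ZMod 2) = 1 := by
    rintro nn ⟨c, rfl⟩; push_cast; simp [show (2:ZMod 2) = 0 from rfl]
  have hcast0 : ∀ nn : ℕ, Even nn → (nn : ZMod 2) = 0 := by
    rintro nn ⟨c, rfl⟩; push_cast; ring_nf; simp [show (2:ZMod 2) = 0 from rfl]
  -- invariance of block orbits
  have hBinv : ∀ t (g : G) x, x ∈ Bo t → g • x ∈ Bo t := by
    intro t g x hxm
    obtain ⟨x₀, hset⟩ := hBo t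
    have hx' : x ∈ (Bo t : Set B) := hxm
    rw [hset] at hx'
    obtain ⟨h, rfl⟩ := hx'
    have : g • h • x₀ ∈ (Bo t : Set B) := by
      rw [hset]; exact ⟨g * h, (mul_smul g h x₀)⟩
    exact this
  -- constancy of R on point orbits
  have hconst : ∀ t j, ∀ pt ∈ Vo j, ∀ pt' ∈ Vo j,
      ((Bo t).filter (fun x => Inc x pt)).card
        = ((Bo t).filter (fun x => Inc x pt')).card := by
    intro t j pt hpt pt' hpt'
    obtain ⟨p₀, hset⟩ := hVo j
    have h1 : pt ∈ (Vo j : Set P) := hpt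
    have h2 : pt' ∈ (Vo j : Set P) := hpt'
    rw [hset] at h1 h2
    obtain ⟨g, hg⟩ := h1
    obtain ⟨g', hg'⟩ := h2
    dsimp only at hg hg'
    have hpp : (g' * g⁻¹) • pt = pt' := by
      rw [← hg, ← hg', mul_smul, inv_smul_smul]
    set h := g' * g⁻¹ with hh
    refine Finset.card_bij' (fun x _ => h • x) (fun x _ => h⁻¹ • x) ?_ ?_ ?_ ?_
    · intro a ha
      simp only [Finset.mem_filter] at ha ⊢
      refine ⟨hBinv t h a ha.1, ?_⟩
      rw [← hpp]
      exact (hGInc h a pt).mp ha.2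
    · intro a ha
      simp only [Finset.mem_filter] at ha ⊢
      refine ⟨hBinv t h⁻¹ a ha.1, ?_⟩
      have := (hGInc h⁻¹ a pt').mp ha.2
      rwa [← hpp, inv_smul_smul] at this
    · intro a _; simp
    · intro a _; simp
  -- double counting: O t j ≡ R t pt (mod 2) for pt ∈ Vo j
  have hdc : ∀ t j, ∀ pt ∈ Vo j, (O t j : ZMod 2)
      = (((Bo t).filter (fun x => Inc x pt)).card : ZMod 2) := by
    intro t j pt hpt
    have key : bL t * O t j = w * ((Bo t).filter (fun x => Inc x pt)).card := by
      calc bL t * O t j = ∑ _x ∈ Bo t, O t j := by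
            rw [Finset.sum_const, smul_eq_mul, hBL]
        _ = ∑ x ∈ Bo t, ((Vo j).filter (fun p => Inc x p)).card :=
            Finset.sum_congr rfl (fun x hxm => hO t j x hxm)
        _ = ∑ p ∈ Vo j, ((Bo t).filter (fun x => Inc x p)).card := by
            simp only [Finset.card_filter]; exact Finset.sum_comm
        _ = ∑ _p ∈ Vo j, ((Bo t).filter (fun x => Inc x pt)).card :=
            Finset.sum_congr rfl (fun p hp => hconst t j p hp pt hpt)
        _ = w * ((Bo t).filter (fun x => Inc x pt)).card := by
            rw [Finset.sum_const, smul_eq_mul, hVw]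
    have hcast := congrArg (Nat.cast : ℕ → ZMod 2) key
    push_cast at hcast
    rwa [hcast1 _ (hbodd t), hcast1 _ hwodd, one_mul, one_mul] at hcast
  -- partition of the point set by point orbits
  have hidxVo : ∀ j, Vo j = univ.filter (fun pt => (hVpart pt).choose = j) := by
    intro j
    ext pt
    simp only [Finset.mem_filter, Finset.mem_univ, true_and]
    constructor
    · intro hmem; exact ((hVpart pt).choose_spec.2 j hmem).symm
    · rintro rfl; exact (hVpart pt).choose_spec.1
  have hpart : ∀ f : P → ZMod 2, (∑ j, ∑ pt ∈ Vo j, f pt) = ∑ pt, f pt := by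
    intro f
    calc (∑ j, ∑ pt ∈ Vo j, f pt)
        = ∑ j, ∑ pt ∈ univ.filter (fun pt => (hVpart pt).choose = j), f pt := by
          exact Finset.sum_congr rfl (fun j _ => by rw [← hidxVo j])
      _ = ∑ pt, f pt := Finset.sum_fiberwise univ (fun pt => (hVpart pt).choose) f
  -- the key orthogonality sum
  have hE : ∀ s t : Fin m, (∑ j, ((O s j : ZMod 2) * (O t j : ZMod 2)))
      = if s = t then 0 else 1 := by
    intro s t
    have hpos : 0 < (Bo s).card := by rw [hBL]; exact (hbodd s).pos
    obtain ⟨x, hx⟩ := Finset.card_pos.mp hpos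
    have step1 : ∀ j, (O s j : ZMod 2) * (O t j : ZMod 2)
        = ∑ pt ∈ Vo j, (if Inc x pt
            then (((Bo t).filter (fun x' => Inc x' pt)).card : ZMod 2) else 0) := by
      intro j
      rw [hO s j x hx, Finset.card_filter]
      push_cast
      rw [Finset.sum_mul]
      refine Finset.sum_congr rfl (fun pt hpt => ?_)
      by_cases hI : Inc x pt
      · simp [hI, ← hdc t j pt hpt]
      · simp [hI]
    rw [Finset.sum_congr rfl (fun j _ => step1 j), hpart]
    have nat2 : (∑ x' ∈ Bo t, (univ.filter (fun pt => Inc x pt ∧ Inc x' pt)).card)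
        = ∑ pt : P, (if Inc x pt then ((Bo t).filter (fun x' => Inc x' pt)).card else 0) := by
      simp only [Finset.card_filter]
      rw [Finset.sum_comm]
      refine Finset.sum_congr rfl (fun pt _ => ?_)
      by_cases hI : Inc x pt
      · simp [hI]
      · simp [hI]
    have step2 : (∑ pt : P, (if Inc x pt
          then (((Bo t).filter (fun x' => Inc x' pt)).card : ZMod 2) else 0))
        = ((∑ x' ∈ Bo t, (univ.filter (fun pt => Inc x pt ∧ Inc x' pt)).card : ℕ) : ZMod 2) := by
      rw [nat2]
      push_cast
      exact Finset.sum_congr rfl (fun pt _ => by by_cases hI : Inc x pt <;> simp [hI])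
    rw [step2]
    push_cast
    by_cases hst : s = t
    · subst hst
      simp only [if_true]
      rw [← Finset.sum_erase_add _ _ hx]
      have h1 : (∑ x' ∈ (Bo s).erase x,
          ((univ.filter (fun pt => Inc x pt ∧ Inc x' pt)).card : ZMod 2))
          = ∑ _x' ∈ (Bo s).erase x, (1 : ZMod 2) := by
        refine Finset.sum_congr rfl (fun x' hx' => ?_)
        exact hcast1 _ (hint x x' (Finset.ne_of_mem_erase hx').symm)
      rw [h1, Finset.sum_const, nsmul_eq_mul, mul_one]
      have hkk : (univ.filter (fun pt => Inc x pt ∧ Inc x pt)).card = k := by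
        rw [← hk x]; congr 1; ext pt; simp
      rw [hkk, hcast0 k hkeven, add_zero]
      apply hcast0
      rw [Finset.card_erase_of_mem hx, hBL]
      exact Nat.Odd.sub_odd (hbodd s) odd_one
    · simp only [hst, if_false]
      have h1 : ∀ x' ∈ Bo t,
          ((univ.filter (fun pt => Inc x pt ∧ Inc x' pt)).card : ZMod 2) = 1 := by
        intro x' hx'
        have hne : x ≠ x' := by
          rintro rfl
          obtain ⟨i, _, huniq⟩ := hBpart x
          exact hst ((huniq s hx).trans (huniq t hx').symm)
        exact hcast1 _ (hint x x' hne)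
      rw [Finset.sum_congr rfl h1, Finset.sum_const, nsmul_eq_mul, mul_one, hBL,
        hcast1 _ (hbodd t)]
  -- pairwise orthogonality of the rows
  have key : ∀ s t : Fin m,
      (Sum.elim (fun i' => if s = i' then (1:ZMod 2) else 0)
        (Sum.elim (fun j => ((O s j : ℕ) : ZMod 2)) (fun _ => 1)) :
          Fin m ⊕ Fin n ⊕ Fin 1 → ZMod 2) ⬝ᵥ
      (Sum.elim (fun i' => if t = i' then (1:ZMod 2) else 0)
        (Sum.elim (fun j => ((O t j : ℕ) : ZMod 2)) (fun _ => 1)) :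
          Fin m ⊕ Fin n ⊕ Fin 1 → ZMod 2) = 0 := by
    intro s t
    simp only [dotProduct, Fintype.sum_sum_type, Sum.elim_inl, Sum.elim_inr]
    have p1 : (∑ i : Fin m, (if s = i then (1:ZMod 2) else 0) * (if t = i then 1 else 0))
        = if s = t then 1 else 0 := by
      simp [ite_and, Finset.sum_ite_eq, eq_comm]
    have p3 : (∑ _x : Fin 1, (1:ZMod 2) * 1) = 1 := by simp
    rw [p1, p3, hE s t]
    by_cases hst : s = t <;> simp [hst] <;> decide
  constructor
  · intro x hx
    induction hx using Submodule.span_induction with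
    | mem z hz =>
      obtain ⟨s, rfl⟩ := hz
      intro y hy
      induction hy using Submodule.span_induction with
      | mem z' hz' =>
        obtain ⟨t, rfl⟩ := hz'
        exact key s t
      | zero => simp
      | add y1 y2 _ _ h1 h2 => rw [dotProduct_add, h1, h2, add_zero]
      | smul c y1 _ h1 => rw [dotProduct_smul, h1, smul_zero]
    | zero => intro y _; simp
    | add x1 x2 _ _ h1 h2 =>
      intro y hy
      rw [add_dotProduct, h1 y hy, h2 y hy, add_zero]
    | smul c x1 _ h1 =>
      intro y hy
      rw [smul_dotProduct, h1 y hy, smul_zero]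
  · have hli : LinearIndependent (ZMod 2)
        (fun i : Fin m => (Sum.elim (fun i' => if i = i' then (1:ZMod 2) else 0)
          (Sum.elim (fun j => ((O i j : ℕ) : ZMod 2)) (fun _ => 1)) :
            Fin m ⊕ Fin n ⊕ Fin 1 → ZMod 2)) := by
      rw [Fintype.linearIndependent_iff]
      intro c hc i
      have hci := congrFun hc (Sum.inl i)
      simp only [Finset.sum_apply, Pi.smul_apply, Sum.elim_inl, smul_eq_mul,
        Pi.zero_apply, mul_ite, mul_one, mul_zero] at hci
      simpa [Finset.sum_ite_eq'] using hci
    rw [finrank_span_eq_card hli, Fintype.card_fin]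
end

section
/- Let p be a prime, w, d integers with p | (w−1), and O an m×n integer matrix satisfying O[s]·O[t] ≡ w·d mod p for s ≠ t and O[s]·O[s] ≡ (w−1)·d mod p for all s. Let F be a field of characteristic p containing square roots s₀ of wd and t₀ of −wd (images in F), with wd ≠ 0 in F. Then the rows of A = [s₀·I_m | O | t₀·𝟏] span a self-orthogonal code over F of length m+n+1 and dimension m. -/
open Matrix Finset

private lemma cast_eq_of_modeq {F : Type*} [Field F] (p : ℕ) [CharP F p]
    {a b : ℤ} (h : a ≡ b [ZMOD p]) : ((a : ℤ) : F) = ((b : ℤ) : F) := by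
  have hd : (p : ℤ) ∣ a - b := Int.ModEq.dvd h.symm
  have : ((a - b : ℤ) : F) = 0 := by
    obtain ⟨k, hk⟩ := hd
    rw [hk]
    push_cast
    simp [CharP.cast_eq_zero F p]
  push_cast at this
  exact sub_eq_zero.mp this

/-- If an integer matrix O satisfies O[s]·O[t] ≡ w·d mod p for s ≠ t and
O[s]·O[s] ≡ (w−1)·d mod p, with p prime, p ∣ (w−1), and F of characteristic p contains
s₀, t₀ with s₀² = wd, t₀² = −wd and wd ≠ 0 in F, then the rows of
A = [s₀·I_m | O | t₀·𝟏] span a self-orthogonal code of length m+n+1 and dimension m. -/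
theorem stmt11 {F : Type*} [Field F] (p : ℕ) (hp : p.Prime) [CharP F p]
    (m n : ℕ) (w d : ℤ) (O : Matrix (Fin m) (Fin n) ℤ)
    (hst : ∀ s t : Fin m, s ≠ t → O s ⬝ᵥ O t ≡ w * d [ZMOD p])
    (hss : ∀ s : Fin m, O s ⬝ᵥ O s ≡ (w - 1) * d [ZMOD p])
    (hpw : (p : ℤ) ∣ (w - 1))
    (s₀ t₀ : F) (hs₀ : s₀ ^ 2 = ((w * d : ℤ) : F)) (ht₀ : t₀ ^ 2 = -((w * d : ℤ) : F))
    (hwd0 : ((w * d : ℤ) : F) ≠ 0)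
    (A : Fin m → (Fin m ⊕ Fin n ⊕ Fin 1) → F)
    (hA : A = fun i => Sum.elim (fun i' => if i = i' then s₀ else 0)
      (Sum.elim (fun j => ((O i j : ℤ) : F)) (fun _ => t₀))) :
    (∀ x ∈ Submodule.span F (Set.range A),
      ∀ y ∈ Submodule.span F (Set.range A), x ⬝ᵥ y = 0) ∧
    Module.finrank F (Submodule.span F (Set.range A)) = m := by
  have hs0ne : s₀ ≠ 0 := by
    intro h; apply hwd0; rw [← hs₀, h]; ring
  -- rows are pairwise orthogonal
  have key : ∀ i j : Fin m, A i ⬝ᵥ A j = 0 := by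
    intro i j
    have hmid : ∀ i j : Fin m, (∑ x : Fin n, ((O i x : ℤ) : F) * ((O j x : ℤ) : F))
        = ((O i ⬝ᵥ O j : ℤ) : F) := by
      intro i j
      push_cast [dotProduct]
      ring
    rw [hA]
    simp only [dotProduct, Fintype.sum_sum_type, Sum.elim_inl, Sum.elim_inr]
    rw [hmid]
    by_cases hij : i = j
    · subst hij
      have h1 : ((O i ⬝ᵥ O i : ℤ) : F) = 0 := by
        rw [cast_eq_of_modeq p (hss i)]
        obtain ⟨k, hk⟩ := hpw
        rw [hk]
        push_cast
        simp [CharP.cast_eq_zero F p]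
      simp [h1, mul_ite, ← pow_two, hs₀, ht₀]
    · have h1 : ((O i ⬝ᵥ O j : ℤ) : F) = ((w * d : ℤ) : F) :=
        cast_eq_of_modeq p (hst i j hij)
      have h2 : (∑ i' : Fin m, (if i = i' then s₀ else 0) * (if j = i' then s₀ else 0)) = 0 := by
        apply Finset.sum_eq_zero
        intro x _
        by_cases hx : i = x
        · subst hx; simp [Ne.symm hij]
        · simp [hx]
      rw [h2, h1]
      simp [← pow_two, ht₀]
  constructor
  · -- self-orthogonality of the span
    intro x hx y hy
    -- first: every element of the span is orthogonal to each row
    have step1 : ∀ j : Fin m, ∀ z ∈ Submodule.span F (Set.range A), z ⬝ᵥ A j = 0 := by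
      intro j z hz
      let f : ((Fin m ⊕ Fin n ⊕ Fin 1) → F) →ₗ[F] F :=
        { toFun := fun v => v ⬝ᵥ A j
          map_add' := fun a b => add_dotProduct a b (A j)
          map_smul' := fun c a => smul_dotProduct c a (A j) }
      have : Submodule.span F (Set.range A) ≤ LinearMap.ker f := by
        rw [Submodule.span_le]
        rintro _ ⟨i, rfl⟩
        exact key i j
      exact this hz
    let g : ((Fin m ⊕ Fin n ⊕ Fin 1) → F) →ₗ[F] F :=
      { toFun := fun v => x ⬝ᵥ v
        map_add' := fun a b => dotProduct_add x a b
        map_smul' := fun c a => dotProduct_smul c x a }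
    have : Submodule.span F (Set.range A) ≤ LinearMap.ker g := by
      rw [Submodule.span_le]
      rintro _ ⟨i, rfl⟩
      exact step1 i x hx
    exact this hy
  · -- dimension
    have hli : LinearIndependent F A := by
      let L : ((Fin m ⊕ Fin n ⊕ Fin 1) → F) →ₗ[F] (Fin m → F) :=
        s₀⁻¹ • { toFun := fun v i => v (Sum.inl i)
                 map_add' := fun a b => rfl
                 map_smul' := fun c a => rfl }
      have hcomp : L ∘ A = fun i => Pi.single i (1 : F) := by
        funext i i'
        simp only [L, Function.comp, hA, LinearMap.smul_apply, LinearMap.coe_mk,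
          AddHom.coe_mk, Pi.smul_apply, Sum.elim_inl, smul_eq_mul]
        by_cases h : i = i'
        · subst h; simp [inv_mul_cancel₀ hs0ne]
        · simp [h, Pi.single_eq_of_ne (Ne.symm h)]
      have hbasis : LinearIndependent F (fun i : Fin m => Pi.single i (1 : F)) := by
        convert (Pi.basisFun F (Fin m)).linearIndependent using 1
        funext i
        simp [Pi.basisFun_apply]
      exact LinearIndependent.of_comp L (hcomp ▸ hbasis)
    rw [finrank_span_eq_card hli, Fintype.card_fin]
end

section
/- Let p be a prime, a an integer, and O an m×n integer matrix with O[s]·O[t] ≡ 0 mod p for all s ≠ t and O[s]·O[s] ≡ a mod p for all s. Let F be a field of characteristic p containing an element t₀ with t₀² = −a (image in F), t₀ ≠ 0. Then the rows of A = [t₀·I_m | O] over F span a self-orthogonal code of length m+n and dimension m; if m = n the code is self-dual. -/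
open Matrix Finset

/-- If an integer matrix O satisfies O[s]·O[t] ≡ 0 mod p for s ≠ t and
O[s]·O[s] ≡ a mod p, with p prime, and F of characteristic p contains t₀ ≠ 0 with
t₀² = −a, then the rows of A = [t₀·I_m | O] span a self-orthogonal code of length
m+n and dimension m; if m = n the code is self-dual. -/
theorem stmt13 {F : Type*} [Field F] (p : ℕ) (hp : p.Prime) [CharP F p]
    (m n : ℕ) (a : ℤ) (O : Matrix (Fin m) (Fin n) ℤ)
    (hst : ∀ s t : Fin m, s ≠ t → O s ⬝ᵥ O t ≡ 0 [ZMOD p])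
    (hss : ∀ s : Fin m, O s ⬝ᵥ O s ≡ a [ZMOD p])
    (t₀ : F) (ht₀ : t₀ ^ 2 = -((a : ℤ) : F)) (ht0 : t₀ ≠ 0)
    (A : Fin m → (Fin m ⊕ Fin n) → F)
    (hA : A = fun i => Sum.elim (fun i' => if i = i' then t₀ else 0)
      (fun j => ((O i j : ℤ) : F))) :
    (∀ x ∈ Submodule.span F (Set.range A),
      ∀ y ∈ Submodule.span F (Set.range A), x ⬝ᵥ y = 0) ∧
    Module.finrank F (Submodule.span F (Set.range A)) = m ∧
    (m = n → ∀ z : (Fin m ⊕ Fin n) → F,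
      z ∈ Submodule.span F (Set.range A) ↔
        ∀ y ∈ Submodule.span F (Set.range A), z ⬝ᵥ y = 0) := by
  -- casting congruences into F
  have castF : ∀ x y : ℤ, x ≡ y [ZMOD p] → ((x : F) = (y : F)) := by
    intro x y h
    have : ((x - y : ℤ) : F) = 0 := by
      rw [CharP.intCast_eq_zero_iff F p]
      exact (Int.ModEq.dvd h.symm)
    push_cast at this
    exact sub_eq_zero.mp this
  -- pairwise orthogonality of rows
  have hAA : ∀ i j : Fin m, A i ⬝ᵥ A j = 0 := by
    intro i j
    subst hA
    have hsum2 : ∑ x : Fin n, ((O i x : ℤ) : F) * ((O j x : ℤ) : F)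
        = ((O i ⬝ᵥ O j : ℤ) : F) := by
      simp [dotProduct]
    rw [dotProduct]
    rw [Fintype.sum_sum_type]
    simp only [Sum.elim_inl, Sum.elim_inr]
    rw [hsum2]
    rcases eq_or_ne i j with rfl | hij
    · rw [castF _ _ (hss i)]
      simp [mul_ite, ← pow_two, ht₀]
    · rw [castF _ _ (hst i j hij)]
      have : ∀ i' : Fin m, (if i = i' then t₀ else 0) * (if j = i' then t₀ else 0) = 0 := by
        intro i'
        rcases eq_or_ne i i' with rfl | h
        · simp [Ne.symm hij]
        · simp [h]
      simp [this]
  -- orthogonality on span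
  have horth : ∀ x ∈ Submodule.span F (Set.range A),
      ∀ y ∈ Submodule.span F (Set.range A), x ⬝ᵥ y = 0 := by
    intro x hx
    induction hx using Submodule.span_induction with
    | mem v hv =>
      obtain ⟨i, rfl⟩ := hv
      intro y hy
      induction hy using Submodule.span_induction with
      | mem w hw => obtain ⟨j, rfl⟩ := hw; exact hAA i j
      | zero => simp
      | add y z _ _ h1 h2 => rw [dotProduct_add, h1, h2, add_zero]
      | smul c y _ h1 => rw [dotProduct_smul, h1, smul_zero]
    | zero => intro y hy; simp
    | add x z _ _ h1 h2 => intro y hy; rw [add_dotProduct, h1 y hy, h2 y hy, add_zero]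
    | smul c x _ h1 => intro y hy; rw [smul_dotProduct, h1 y hy, smul_zero]
  -- linear independence of rows
  have hli : LinearIndependent F A := by
    rw [Fintype.linearIndependent_iff]
    intro c hc j
    have := congrFun hc (Sum.inl j)
    simp only [Finset.sum_apply, Pi.smul_apply, Pi.zero_apply, hA, Sum.elim_inl,
      smul_eq_mul, mul_ite, mul_zero] at this
    rw [Finset.sum_ite_eq' Finset.univ j (fun i => c i * t₀)] at this
    simp at this
    rcases this with h | h
    · exact h
    · exact absurd h ht0
  have hrank : Module.finrank F (Submodule.span F (Set.range A)) = m := by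
    rw [finrank_span_eq_card hli, Fintype.card_fin]
  refine ⟨horth, hrank, ?_⟩
  -- self-dual case
  intro hmn z
  constructor
  · intro hz y hy; exact horth z hz y hy
  · intro hz
    set M : Matrix (Fin m) (Fin m ⊕ Fin n) F := Matrix.of A with hM
    have hker : z ∈ LinearMap.ker M.mulVecLin := by
      rw [LinearMap.mem_ker]
      funext i
      have := hz (A i) (Submodule.subset_span ⟨i, rfl⟩)
      rw [dotProduct_comm] at this
      simpa [Matrix.mulVecLin, Matrix.mulVec, hM] using this
    have hrankM : M.rank = m := by
      rw [Matrix.rank_eq_finrank_span_row]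
      exact hrank
    have hdim : Module.finrank F (LinearMap.ker M.mulVecLin) = n := by
      have h1 := LinearMap.finrank_range_add_finrank_ker M.mulVecLin
      have h2 : Module.finrank F ((Fin m ⊕ Fin n) → F) = m + n := by
        simp
      rw [h2] at h1
      have : M.rank + Module.finrank F (LinearMap.ker M.mulVecLin) = m + n := h1
      omega
    have hle : Submodule.span F (Set.range A) ≤ LinearMap.ker M.mulVecLin := by
      rw [Submodule.span_le]
      rintro v ⟨i, rfl⟩
      rw [SetLike.mem_coe, LinearMap.mem_ker]
      funext j
      have := horth (A j) (Submodule.subset_span ⟨j, rfl⟩) (A i) (Submodule.subset_span ⟨i, rfl⟩)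
      simpa [Matrix.mulVecLin, Matrix.mulVec, hM] using this
    have heq : Submodule.span F (Set.range A) = LinearMap.ker M.mulVecLin :=
      Submodule.eq_of_le_of_finrank_eq hle (by rw [hrank, hdim, hmn])
    rw [heq]
    exact hker
end

section
/- Let p be a prime, w, d integers with p ∤ w, and O an m×n integer matrix satisfying O[s]·O[t] ≡ w·d mod p for all s, t (including s = t). Let F be a field of characteristic p containing t₀ with t₀² = −wd (image in F). Then the rows of A = [O | t₀·𝟏] span a self-orthogonal code over F of length n+1. -/
open Matrix Finset

/-- If an integer matrix O satisfies O[s]·O[t] ≡ w·d mod p for all s, t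
(including s = t), with p prime, p ∤ w, and F of characteristic p contains t₀ with
t₀² = −wd, then the rows of A = [O | t₀·𝟏] span a self-orthogonal code over F of
length n+1. -/
theorem stmt15 {F : Type*} [Field F] (p : ℕ) (hp : p.Prime) [CharP F p]
    (m n : ℕ) (w d : ℤ) (O : Matrix (Fin m) (Fin n) ℤ)
    (hpw : ¬ (p : ℤ) ∣ w)
    (hst : ∀ s t : Fin m, O s ⬝ᵥ O t ≡ w * d [ZMOD p])
    (t₀ : F) (ht₀ : t₀ ^ 2 = -((w * d : ℤ) : F))
    (A : Fin m → (Fin n ⊕ Fin 1) → F)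
    (hA : A = fun i => Sum.elim (fun j => ((O i j : ℤ) : F)) (fun _ => t₀)) :
    ∀ x ∈ Submodule.span F (Set.range A),
      ∀ y ∈ Submodule.span F (Set.range A), x ⬝ᵥ y = 0 := by
  have key : ∀ s t : Fin m, A s ⬝ᵥ A t = 0 := by
    intro s t
    have hdvd : (p : ℤ) ∣ (O s ⬝ᵥ O t - w * d) := (hst s t).symm.dvd
    have hcast : ((O s ⬝ᵥ O t : ℤ) : F) = ((w * d : ℤ) : F) := by
      have := (CharP.intCast_eq_zero_iff F p _).2 hdvd
      push_cast at this ⊢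
      linear_combination this
    subst hA
    simp only [dotProduct, Fintype.sum_sum_type, Sum.elim_inl, Sum.elim_inr]
    have h1 : ∑ j : Fin n, ((O s j : ℤ) : F) * ((O t j : ℤ) : F)
        = ((O s ⬝ᵥ O t : ℤ) : F) := by
      simp [dotProduct]
    rw [h1, hcast]
    have h2 : ∑ _x : Fin 1, t₀ * t₀ = t₀ ^ 2 := by simp [sq]
    rw [h2, ht₀]
    ring
  intro x hx
  induction hx using Submodule.span_induction with
  | mem a ha =>
    obtain ⟨s, rfl⟩ := ha
    intro y hy
    induction hy using Submodule.span_induction with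
    | mem b hb => obtain ⟨t, rfl⟩ := hb; exact key s t
    | zero => simp
    | add b c _ _ ihb ihc => rw [dotProduct_add, ihb, ihc, add_zero]
    | smul r b _ ih => rw [dotProduct_smul, ih, smul_zero]
  | zero => intro y hy; simp
  | add a b _ _ iha ihb =>
    intro y hy
    rw [add_dotProduct, iha y hy, ihb y hy, add_zero]
  | smul r a _ ih =>
    intro y hy
    rw [smul_dotProduct, ih y hy, smul_zero]
end

section
/- Let p be a prime, a, d ∈ integers with a ≢ d mod p, and O an m×n integer matrix with O[s]·O[t] ≡ w·d mod p for s ≠ t and O[s]·O[s] ≡ a − d + w·d mod p, where p | w. Let F be a field of characteristic p with s₀² = d−a (image in F), s₀ ≠ 0. Then the rows of A = [s₀·I_m | O] span a self-orthogonal code over F of length m+n and dimension m; if m = n the code is self-dual. -/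
/-!
Over `F` the Gram matrix of the rows of `A = [s₀ I | O]` is `s₀² I + O Oᵀ`. Modulo `p` the
hypotheses say `O Oᵀ ≡ (a - d) I + w d J`, and `p ∣ w` kills the all-ones part, so the Gram
matrix is `(s₀² + a - d) I = 0`. The identity block makes the rows independent, and a
self-orthogonal subspace of half the ambient dimension is its own orthogonal complement because
the dot product is nondegenerate.
-/

open Matrix Module

section

variable {F ι κ : Type*} [Field F]

theorem dotProduct_eq_zero_of_mem_span_rows [Fintype ι] {G : Matrix κ ι F} (hG : G * Gᵀ = 0)
    {x y : ι → F} (hx : x ∈ Submodule.span F (Set.range G))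
    (hy : y ∈ Submodule.span F (Set.range G)) : x ⬝ᵥ y = 0 := by
  induction hx, hy using Submodule.span_induction₂ with
  | mem_mem x y hx hy =>
    obtain ⟨i, rfl⟩ := hx
    obtain ⟨j, rfl⟩ := hy
    simpa [mul_apply, dotProduct] using congrFun (congrFun hG i) j
  | zero_left => exact zero_dotProduct _
  | zero_right => exact dotProduct_zero _
  | add_left _ _ _ _ _ _ h₁ h₂ => rw [add_dotProduct, h₁, h₂, add_zero]
  | add_right _ _ _ _ _ _ h₁ h₂ => rw [dotProduct_add, h₁, h₂, add_zero]
  | smul_left _ _ _ _ _ h => rw [smul_dotProduct, h, smul_zero]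
  | smul_right _ _ _ _ _ h => rw [dotProduct_smul, h, smul_zero]

theorem mem_iff_forall_dotProduct_eq_zero [Fintype ι] [DecidableEq ι] {W : Submodule F (ι → F)}
    (hW : ∀ x ∈ W, ∀ y ∈ W, x ⬝ᵥ y = 0) (hdim : 2 * finrank F W = Fintype.card ι)
    (z : ι → F) : z ∈ W ↔ ∀ y ∈ W, z ⬝ᵥ y = 0 := by
  set B := Matrix.toBilin' (1 : Matrix ι ι F)
  have hB : ∀ x y, B x y = x ⬝ᵥ y := fun x y => by simp [B, Matrix.toBilin'_apply']
  have hnd : B.Nondegenerate :=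
    Matrix.nondegenerate_toBilin'_iff.2 (nondegenerate_of_det_ne_zero (by simp))
  have hle : W ≤ B.orthogonal W := fun x hx =>
    (LinearMap.BilinForm.mem_orthogonal_iff).2 fun y hy => by rw [hB]; exact hW y hy x hx
  have heq : W = B.orthogonal W := Submodule.eq_of_le_of_finrank_eq hle <| by
    rw [LinearMap.BilinForm.finrank_orthogonal hnd, finrank_fintype_fun_eq_card]; omega
  refine ⟨fun hz y hy => hW z hz y hy, fun hz => ?_⟩
  rw [heq, LinearMap.BilinForm.mem_orthogonal_iff]
  intro y hy
  rw [hB, dotProduct_comm]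
  exact hz y hy

theorem linearIndependent_fromCols_of_left {κ' : Type*} {A₁ : Matrix κ ι F} {A₂ : Matrix κ κ' F}
    (h : LinearIndependent F A₁) : LinearIndependent F (fromCols A₁ A₂) :=
  LinearIndependent.of_comp (LinearMap.funLeft F F Sum.inl) h

theorem map_intCast_mul_transpose_map_eq_smul_one {R : Type*} [Ring R] (p : ℕ) [CharP R p]
    [Fintype ι] [DecidableEq κ] (O : Matrix κ ι ℤ) (c w : ℤ) (hpw : (p : ℤ) ∣ w)
    (hst : ∀ s t, s ≠ t → O s ⬝ᵥ O t ≡ w [ZMOD p]) (hss : ∀ s, O s ⬝ᵥ O s ≡ c + w [ZMOD p]) :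
    O.map (Int.cast : ℤ → R) * (O.map (Int.cast : ℤ → R))ᵀ = (c : R) • (1 : Matrix κ κ R) := by
  have hw : (w : R) = 0 := (CharP.intCast_eq_zero_iff R p w).2 hpw
  ext s t
  have hentry : (O.map (Int.cast : ℤ → R) * (O.map (Int.cast : ℤ → R))ᵀ) s t =
      ((O s ⬝ᵥ O t : ℤ) : R) := by
    simp [mul_apply, dotProduct]
  rw [hentry, Matrix.smul_apply, one_apply]
  split_ifs with h
  · subst h
    rw [(CharP.intCast_eq_intCast R p).2 (hss s), Int.cast_add, hw, add_zero, smul_eq_mul, mul_one]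
  · rw [(CharP.intCast_eq_intCast R p).2 (hst s t h), hw, smul_zero]

end

theorem stmt16_general {F : Type*} [Field F] (p : ℕ) [CharP F p]
    (m n : ℕ) (a d w : ℤ) (O : Matrix (Fin m) (Fin n) ℤ)
    (hst : ∀ s t : Fin m, s ≠ t → O s ⬝ᵥ O t ≡ w * d [ZMOD p])
    (hss : ∀ s : Fin m, O s ⬝ᵥ O s ≡ a - d + w * d [ZMOD p])
    (hpw : (p : ℤ) ∣ w)
    (s₀ : F) (hs₀ : s₀ ^ 2 = ((d - a : ℤ) : F)) (hs0 : s₀ ≠ 0)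
    (A : Fin m → (Fin m ⊕ Fin n) → F)
    (hA : A = fun i => Sum.elim (fun i' => if i = i' then s₀ else 0)
      (fun j => ((O i j : ℤ) : F))) :
    (∀ x ∈ Submodule.span F (Set.range A),
      ∀ y ∈ Submodule.span F (Set.range A), x ⬝ᵥ y = 0) ∧
    Module.finrank F (Submodule.span F (Set.range A)) = m ∧
    (m = n → ∀ z : (Fin m ⊕ Fin n) → F,
      z ∈ Submodule.span F (Set.range A) ↔
        ∀ y ∈ Submodule.span F (Set.range A), z ⬝ᵥ y = 0) := by
  have hA' : of A = fromCols (s₀ • 1) (O.map (↑)) := by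
    subst hA; ext i (j | j) <;> simp [one_apply]
  have hgram : of A * (of A)ᵀ = 0 := by
    rw [hA', transpose_fromCols, fromCols_mul_fromRows,
      map_intCast_mul_transpose_map_eq_smul_one p O (a - d) (w * d) (hpw.mul_right d) hst hss,
      transpose_smul, transpose_one, smul_one_mul, smul_smul, ← sq, hs₀, ← add_smul,
      ← Int.cast_add, sub_add_sub_cancel', sub_self, Int.cast_zero, zero_smul]
  have hindep : LinearIndependent F (of A) := by
    rw [hA']
    exact linearIndependent_fromCols_of_left
      (linearIndependent_rows_of_isUnit (by simp [isUnit_iff_isUnit_det, hs0]))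
  have hortho : ∀ x ∈ Submodule.span F (Set.range A),
      ∀ y ∈ Submodule.span F (Set.range A), x ⬝ᵥ y = 0 := fun x hx y hy =>
    dotProduct_eq_zero_of_mem_span_rows hgram hx hy
  have hrank : Module.finrank F (Submodule.span F (Set.range A)) = m :=
    (finrank_span_eq_card hindep).trans (Fintype.card_fin m)
  refine ⟨hortho, hrank, fun hmn => mem_iff_forall_dotProduct_eq_zero hortho ?_⟩
  simp [hrank, hmn, two_mul]

/-- If an integer matrix O satisfies O[s]·O[t] ≡ w·d mod p for s ≠ t and
O[s]·O[s] ≡ a − d + w·d mod p, with p prime, a ≢ d mod p, p ∣ w, and F of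
characteristic p contains s₀ ≠ 0 with s₀² = d − a, then the rows of A = [s₀·I_m | O]
span a self-orthogonal code of length m+n and dimension m; if m = n it is self-dual. -/
theorem stmt16 {F : Type*} [Field F] (p : ℕ) (hp : p.Prime) [CharP F p]
    (m n : ℕ) (a d w : ℤ) (O : Matrix (Fin m) (Fin n) ℤ)
    (had : ¬ a ≡ d [ZMOD p])
    (hst : ∀ s t : Fin m, s ≠ t → O s ⬝ᵥ O t ≡ w * d [ZMOD p])
    (hss : ∀ s : Fin m, O s ⬝ᵥ O s ≡ a - d + w * d [ZMOD p])
    (hpw : (p : ℤ) ∣ w)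
    (s₀ : F) (hs₀ : s₀ ^ 2 = ((d - a : ℤ) : F)) (hs0 : s₀ ≠ 0)
    (A : Fin m → (Fin m ⊕ Fin n) → F)
    (hA : A = fun i => Sum.elim (fun i' => if i = i' then s₀ else 0)
      (fun j => ((O i j : ℤ) : F))) :
    (∀ x ∈ Submodule.span F (Set.range A),
      ∀ y ∈ Submodule.span F (Set.range A), x ⬝ᵥ y = 0) ∧
    Module.finrank F (Submodule.span F (Set.range A)) = m ∧
    (m = n → ∀ z : (Fin m ⊕ Fin n) → F,
      z ∈ Submodule.span F (Set.range A) ↔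
        ∀ y ∈ Submodule.span F (Set.range A), z ⬝ᵥ y = 0) :=
  stmt16_general p m n a d w O hst hss hpw s₀ hs₀ hs0 A hA
end

section
/- Let D be a weakly self-orthogonal 1-(v,k,r) design with k even and all block intersection numbers odd. Suppose a group G acts on D with f_1 fixed points and point orbits of length 2, and f_2 fixed blocks and m block orbits of length 2. Let OM1 be the f_2×f_1 (0,1)-matrix recording incidence of fixed blocks with fixed points. Then the rows of the binary matrix [I_{f_2} | OM1 | 𝟏] span a binary self-orthogonal code of length f_2 + f_1 + 1 and dimension f_2. -/
open Matrix Finset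

/-- Auxiliary: if all non-fixed points have orbits of size 2, then for any
G-invariant predicate `Q`, the sum over the fixed points of the indicator of `Q`
equals (mod 2) the total number of points satisfying `Q`. -/
lemma stmt17_aux {P G : Type*} [Fintype P] [Group G] [MulAction G P]
    {f₁ : ℕ} (pf : Fin f₁ → P) (hpfinj : Function.Injective pf)
    (hpfix : ∀ j (g : G), g • pf j = pf j)
    (hpall : ∀ pt : P, (∀ g : G, g • pt = pt) → ∃ j, pf j = pt)
    (hporb : ∀ pt : P, (¬ ∀ g : G, g • pt = pt) → (MulAction.orbit G pt).ncard = 2)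
    (Q : P → Prop) [DecidablePred Q]
    (hQ : ∀ (g : G) (pt : P), Q pt ↔ Q (g • pt)) :
    (∑ j : Fin f₁, if Q (pf j) then (1 : ZMod 2) else 0)
      = ((Finset.univ.filter Q).card : ZMod 2) := by
  classical
  -- existence of the "other" element of a size-2 orbit
  have hex : ∀ pt : P, (¬ ∀ g : G, g • pt = pt) →
      ∃ q, q ∈ MulAction.orbit G pt ∧ q ≠ pt := by
    intro pt h
    obtain ⟨x, y, hxy, horb⟩ := Set.ncard_eq_two.mp (hporb pt h)
    have hpt : pt ∈ MulAction.orbit G pt := MulAction.mem_orbit_self pt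
    rw [horb] at hpt
    rcases hpt with h1 | h2
    · subst h1
      exact ⟨y, by rw [horb]; simp, fun hc => hxy hc.symm⟩
    · rw [Set.mem_singleton_iff] at h2
      subst h2
      exact ⟨x, by rw [horb]; simp, hxy⟩
  set σ : ∀ pt : P, (¬ ∀ g : G, g • pt = pt) → P :=
    fun pt h => (hex pt h).choose with hσ
  have hσmem : ∀ pt h, σ pt h ∈ MulAction.orbit G pt := fun pt h => (hex pt h).choose_spec.1
  have hσne : ∀ pt h, σ pt h ≠ pt := fun pt h => (hex pt h).choose_spec.2
  have hσorb : ∀ pt h, MulAction.orbit G (σ pt h) = MulAction.orbit G pt :=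
    fun pt h => MulAction.orbit_eq_iff.mpr (hσmem pt h)
  have hσnf : ∀ pt h, ¬ ∀ g : G, g • σ pt h = σ pt h := by
    intro pt h hc
    have h1 : MulAction.orbit G (σ pt h) = {σ pt h} := by
      apply Set.eq_singleton_iff_unique_mem.mpr
      refine ⟨MulAction.mem_orbit_self _, ?_⟩
      rintro x ⟨g, rfl⟩
      exact hc g
    have := hporb pt h
    rw [← hσorb pt h, h1] at this
    simp at this
  have hσQ : ∀ pt h, Q (σ pt h) ↔ Q pt := by
    intro pt h
    obtain ⟨g, hg⟩ := hσmem pt h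
    rw [← hg]
    exact (hQ g pt).symm
  have hσσ : ∀ pt h h', σ (σ pt h) h' = pt := by
    intro pt h h'
    obtain ⟨x, y, hxy, horb⟩ := Set.ncard_eq_two.mp (hporb pt h)
    have hpt : pt ∈ ({x, y} : Set P) := horb ▸ MulAction.mem_orbit_self pt
    have hs : σ pt h ∈ ({x, y} : Set P) := horb ▸ hσmem pt h
    have hss : σ (σ pt h) h' ∈ ({x, y} : Set P) := by
      have := hσmem (σ pt h) h'
      rw [hσorb pt h, horb] at this
      exact this
    have hne1 := hσne pt h
    have hne2 := hσne (σ pt h) h'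
    simp only [Set.mem_insert_iff, Set.mem_singleton_iff] at hpt hs hss
    rcases hpt with rfl | rfl <;> rcases hs with h2 | h2 <;>
      rcases hss with h3 | h3 <;> simp_all
  -- sum over fixed points equals sum over Fin f₁
  have hbij : (∑ j : Fin f₁, if Q (pf j) then (1 : ZMod 2) else 0)
      = ∑ pt ∈ Finset.univ.filter (fun pt : P => ∀ g : G, g • pt = pt),
          (if Q pt then (1 : ZMod 2) else 0) := by
    refine Finset.sum_bij (fun j _ => pf j) ?_ ?_ ?_ ?_
    · intro j _; simp only [Finset.mem_filter, Finset.mem_univ, true_and]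
      exact fun g => hpfix j g
    · intro a _ b _ hab; exact hpfinj hab
    · intro pt hpt
      simp only [Finset.mem_filter, Finset.mem_univ, true_and] at hpt
      obtain ⟨j, hj⟩ := hpall pt hpt
      exact ⟨j, Finset.mem_univ j, hj⟩
    · intro j _; rfl
  -- sum over non-fixed points is zero
  have hnf : ∑ pt ∈ Finset.univ.filter (fun pt : P => ¬ ∀ g : G, g • pt = pt),
      (if Q pt then (1 : ZMod 2) else 0) = 0 := by
    refine Finset.sum_involution
      (fun pt hpt => σ pt ((Finset.mem_filter.mp hpt).2)) ?_ ?_ ?_ ?_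
    · intro a ha
      rw [if_congr (hσQ a ((Finset.mem_filter.mp ha).2)) rfl rfl]
      exact CharTwo.add_self_eq_zero _
    · intro a ha _; exact hσne a ((Finset.mem_filter.mp ha).2)
    · intro a ha
      simp only [Finset.mem_filter, Finset.mem_univ, true_and]
      exact hσnf a ((Finset.mem_filter.mp ha).2)
    · intro a ha
      exact hσσ a ((Finset.mem_filter.mp ha).2)
        (hσnf a ((Finset.mem_filter.mp ha).2))
  have hsplit := Finset.sum_filter_add_sum_filter_not Finset.univ
    (fun pt : P => ∀ g : G, g • pt = pt) (fun pt => if Q pt then (1 : ZMod 2) else 0)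
  rw [hbij, ← Finset.sum_boole, ← hsplit, hnf, add_zero]

/-- For a weakly self-orthogonal 1-(v,k,r) design with k even and all
block intersection numbers odd, and a group acting with f₁ fixed points and point
orbits of length 2, and f₂ fixed blocks and m block orbits of length 2, the rows of
[I_{f₂} | OM1 | 𝟏] over F_2 (OM1 the incidence matrix of fixed blocks vs fixed
points) span a binary self-orthogonal code of length f₂ + f₁ + 1 and dimension f₂. -/
theorem stmt17 {P B G : Type*} [Fintype P] [Fintype B] [Group G]
    [MulAction G P] [MulAction G B]
    (Inc : B → P → Prop) [∀ x, DecidablePred (Inc x)]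
    (hGInc : ∀ (g : G) (x : B) (pt : P), Inc x pt ↔ Inc (g • x) (g • pt))
    (k r : ℕ)
    (hk : ∀ x : B, (Finset.univ.filter (fun pt => Inc x pt)).card = k)
    (hr : ∀ pt : P, (Finset.univ.filter (fun x => Inc x pt)).card = r)
    (hkeven : Even k)
    (hint : ∀ x x' : B, x ≠ x' →
      Odd (Finset.univ.filter (fun pt => Inc x pt ∧ Inc x' pt)).card)
    (f₁ f₂ m : ℕ)
    (pf : Fin f₁ → P) (hpfinj : Function.Injective pf)
    (hpfix : ∀ j (g : G), g • pf j = pf j)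
    (hpall : ∀ pt : P, (∀ g : G, g • pt = pt) → ∃ j, pf j = pt)
    (hporb : ∀ pt : P, (¬ ∀ g : G, g • pt = pt) → (MulAction.orbit G pt).ncard = 2)
    (bf : Fin f₂ → B) (hbfinj : Function.Injective bf)
    (hbfix : ∀ i (g : G), g • bf i = bf i)
    (hball : ∀ x : B, (∀ g : G, g • x = x) → ∃ i, bf i = x)
    (hborb : ∀ x : B, (¬ ∀ g : G, g • x = x) → (MulAction.orbit G x).ncard = 2)
    (hbm : {x : B | ¬ ∀ g : G, g • x = x}.ncard = 2 * m)
    (A : Fin f₂ → (Fin f₂ ⊕ Fin f₁ ⊕ Fin 1) → ZMod 2)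
    (hA : A = fun i => Sum.elim (fun i' => if i = i' then 1 else 0)
      (Sum.elim (fun j => if Inc (bf i) (pf j) then 1 else 0) (fun _ => 1))) :
    (∀ x ∈ Submodule.span (ZMod 2) (Set.range A),
      ∀ y ∈ Submodule.span (ZMod 2) (Set.range A), x ⬝ᵥ y = 0) ∧
    Module.finrank (ZMod 2) (Submodule.span (ZMod 2) (Set.range A)) = f₂ := by
  classical
  -- rows are pairwise orthogonal
  have horth : ∀ i i' : Fin f₂, A i ⬝ᵥ A i' = 0 := by
    intro i i'
    have hmid : (∑ j : Fin f₁, if Inc (bf i) (pf j) ∧ Inc (bf i') (pf j)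
        then (1 : ZMod 2) else 0)
        = ((Finset.univ.filter
            (fun pt => Inc (bf i) pt ∧ Inc (bf i') pt)).card : ZMod 2) := by
      refine stmt17_aux pf hpfinj hpfix hpall hporb
        (fun pt => Inc (bf i) pt ∧ Inc (bf i') pt) ?_
      intro g pt
      constructor
      · rintro ⟨h1, h2⟩
        exact ⟨by rw [← hbfix i g]; exact (hGInc g _ _).mp h1,
               by rw [← hbfix i' g]; exact (hGInc g _ _).mp h2⟩
      · rintro ⟨h1, h2⟩
        rw [← hbfix i g] at h1; rw [← hbfix i' g] at h2
        exact ⟨(hGInc g _ _).mpr h1, (hGInc g _ _).mpr h2⟩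
    have hsum : A i ⬝ᵥ A i'
        = (if i = i' then (1 : ZMod 2) else 0)
          + ((∑ j : Fin f₁, if Inc (bf i) (pf j) ∧ Inc (bf i') (pf j)
              then (1 : ZMod 2) else 0) + 1) := by
      have e1 : ∑ i'' : Fin f₂, A i (Sum.inl i'') * A i' (Sum.inl i'')
          = (if i = i' then (1 : ZMod 2) else 0) := by
        rw [hA]
        simp only [Sum.elim_inl]
        rw [Finset.sum_eq_single i]
        · rw [if_pos rfl, one_mul]
          by_cases h : i = i'
          · simp [h]
          · rw [if_neg h, if_neg (fun hc => h hc.symm)]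
        · intro b _ hb; simp [Ne.symm hb]
        · simp
      have e2 : ∑ j : Fin f₁, A i (Sum.inr (Sum.inl j)) * A i' (Sum.inr (Sum.inl j))
          = ∑ j : Fin f₁, if Inc (bf i) (pf j) ∧ Inc (bf i') (pf j)
              then (1 : ZMod 2) else 0 := by
        apply Finset.sum_congr rfl
        intro j _
        rw [hA]
        simp only [Sum.elim_inr, Sum.elim_inl]
        by_cases h1 : Inc (bf i) (pf j) <;> by_cases h2 : Inc (bf i') (pf j) <;>
          simp [h1, h2]
      have e3 : ∑ x : Fin 1, A i (Sum.inr (Sum.inr x)) * A i' (Sum.inr (Sum.inr x))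
          = 1 := by
        rw [hA]; simp
      rw [dotProduct, Fintype.sum_sum_type, Fintype.sum_sum_type, e1, e2, e3]
    rw [hsum, hmid]
    by_cases h : i = i'
    · subst h
      have hcard : (Finset.univ.filter
          (fun pt => Inc (bf i) pt ∧ Inc (bf i) pt)).card = k := by
        rw [← hk (bf i)]
        congr 1
        ext pt
        simp [Finset.mem_filter]
      rw [hcard, (ZMod.natCast_eq_zero_iff k 2).mpr hkeven.two_dvd,
        if_pos rfl]
      decide
    · have hbne : bf i ≠ bf i' := fun hc => h (hbfinj hc)
      obtain ⟨t, ht⟩ := hint (bf i) (bf i') hbne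
      have h1 : ((2 * t + 1 : ℕ) : ZMod 2) = 1 := by
        push_cast
        rw [show ((2 : ZMod 2)) = 0 by rfl]
        ring
      rw [ht, h1, if_neg h]
      decide
  constructor
  · -- orthogonality extends to the span
    intro x hx y hy
    obtain ⟨c, rfl⟩ := (Submodule.mem_span_range_iff_exists_fun (ZMod 2)).mp hx
    obtain ⟨d, rfl⟩ := (Submodule.mem_span_range_iff_exists_fun (ZMod 2)).mp hy
    rw [dotProduct]
    simp only [Finset.sum_apply, Pi.smul_apply, smul_eq_mul]
    have : ∀ t, (∑ i, c i * A i t) * (∑ i', d i' * A i' t)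
        = ∑ i, ∑ i', (c i * d i') * (A i t * A i' t) := by
      intro t
      rw [Finset.sum_mul_sum]
      apply Finset.sum_congr rfl; intro i _
      apply Finset.sum_congr rfl; intro i' _
      ring
    simp only [this]
    rw [Finset.sum_comm]
    apply Finset.sum_eq_zero
    intro i _
    rw [Finset.sum_comm]
    apply Finset.sum_eq_zero
    intro i' _
    rw [← Finset.mul_sum]
    have : ∑ t, A i t * A i' t = 0 := horth i i'
    rw [this, mul_zero]
  · -- linear independence gives the dimension
    have hli : LinearIndependent (ZMod 2) A := by
      rw [Fintype.linearIndependent_iff]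
      intro g hg i
      have := congrFun hg (Sum.inl i)
      simp only [Finset.sum_apply, Pi.smul_apply, smul_eq_mul, Pi.zero_apply, hA,
        Sum.elim_inl] at this
      rw [Finset.sum_eq_single i] at this
      · simpa using this
      · intro b _ hb; simp [hb]
      · simp
    rw [finrank_span_eq_card hli, Fintype.card_fin]
end

section
/- Let p be a prime, q = p^l, and let a be an integer. Suppose a (0,1)-matrix OM1 of size f_2 × f_1 has all row weights ≡ a mod p and all inner products of distinct rows ≡ 0 mod p. Let F be a field of characteristic p containing t₀ with t₀² = −a (image in F), t₀ ≠ 0. Then the rows of [t₀·I_{f_2} | OM1] span a self-orthogonal code over F of length f_2 + f_1 and dimension f_2. -/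
open Matrix Finset

/-- Let p be a prime, q = p^l, a an integer. If a (0,1)-matrix OM1 of
size f₂ × f₁ has all row weights ≡ a mod p and all inner products of distinct rows
≡ 0 mod p, and F of characteristic p contains t₀ ≠ 0 with t₀² = −a, then the rows of
[t₀·I_{f₂} | OM1] span a self-orthogonal code over F of length f₂ + f₁ and
dimension f₂. -/
theorem stmt19 {F : Type*} [Field F] [DecidableEq F] (p l q : ℕ) (hp : p.Prime)
    (hq : q = p ^ l) [CharP F p] (a : ℤ) (f₁ f₂ : ℕ)
    (OM1 : Matrix (Fin f₂) (Fin f₁) F)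
    (h01 : ∀ i j, OM1 i j = 0 ∨ OM1 i j = 1)
    (hw : ∀ i, (((Finset.univ.filter (fun j => OM1 i j = 1)).card : ℕ) : F) = (a : F))
    (hdd : ∀ i i', i ≠ i' →
      (((Finset.univ.filter (fun j => OM1 i j = 1 ∧ OM1 i' j = 1)).card : ℕ) : F) = 0)
    (t₀ : F) (ht₀ : t₀ ^ 2 = -((a : ℤ) : F)) (ht0 : t₀ ≠ 0)
    (A : Fin f₂ → (Fin f₂ ⊕ Fin f₁) → F)
    (hA : A = fun i => Sum.elim (fun i' => if i = i' then t₀ else 0) (OM1 i)) :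
    (∀ x ∈ Submodule.span F (Set.range A),
      ∀ y ∈ Submodule.span F (Set.range A), x ⬝ᵥ y = 0) ∧
    Module.finrank F (Submodule.span F (Set.range A)) = f₂ := by
  have hsum : ∀ (i i' : Fin f₂), (∑ j, OM1 i j * OM1 i' j) =
      ((Finset.univ.filter (fun j => OM1 i j = 1 ∧ OM1 i' j = 1)).card : F) := by
    intro i i'
    rw [Finset.card_filter]
    push_cast
    refine Finset.sum_congr rfl fun j _ => ?_
    rcases h01 i j with h | h <;> rcases h01 i' j with h' | h' <;> simp [h, h']
  have key : ∀ i i' : Fin f₂, A i ⬝ᵥ A i' = 0 := by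
    intro i i'
    rw [hA]
    rw [dotProduct, Fintype.sum_sum_type]
    simp only [Sum.elim_inl, Sum.elim_inr]
    by_cases h : i = i'
    · subst h
      have h1 : (∑ i'' : Fin f₂, (if i = i'' then t₀ else 0) * (if i = i'' then t₀ else 0)) = t₀ ^ 2 := by
        rw [Finset.sum_eq_single i]
        · simp [pow_two]
        · intro b _ hb; simp [Ne.symm hb]
        · simp
      rw [h1, hsum]
      simp only [and_self]
      rw [hw, ht₀]
      ring
    · have h1 : (∑ i'' : Fin f₂, (if i = i'' then t₀ else 0) * (if i' = i'' then t₀ else 0)) = 0 := by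
        apply Finset.sum_eq_zero
        intro x _
        by_cases hx : i = x
        · subst hx
          have : ¬ (i' = i) := fun hh => h hh.symm
          simp [this]
        · simp [hx]
      rw [h1, hsum, hdd i i' h]
      ring
  constructor
  · intro x hx
    induction hx using Submodule.span_induction with
    | mem v hv =>
      obtain ⟨i, rfl⟩ := hv
      intro y hy
      induction hy using Submodule.span_induction with
      | mem w hw' => obtain ⟨i', rfl⟩ := hw'; exact key i i'
      | zero => simp
      | add y z _ _ hy hz => rw [dotProduct_add, hy, hz, add_zero]
      | smul c y _ hy => rw [dotProduct_smul, hy, smul_zero]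
    | zero => intro y _; simp
    | add x z _ _ hx hz => intro y hy; rw [add_dotProduct, hx y hy, hz y hy, add_zero]
    | smul c x _ hx => intro y hy; rw [smul_dotProduct, hx y hy, smul_zero]
  · have lin : LinearIndependent F A := by
      rw [Fintype.linearIndependent_iff]
      intro c hc i
      have h2 := congrFun hc (Sum.inl i)
      simp only [hA, Finset.sum_apply, Pi.smul_apply, Sum.elim_inl, smul_eq_mul,
        Pi.zero_apply] at h2
      rw [Finset.sum_eq_single i] at h2
      · simpa using (mul_eq_zero.mp (by simpa using h2)).resolve_right ht0
      · intro b _ hb; simp [hb]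
      · simp
    rw [finrank_span_eq_card lin, Fintype.card_fin]
end
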